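/- arXiv:2505.03903 — 5 statements merged into one kernel-verified Lean document; each statement's English description precedes it below -/
import Mathlib

section
/- For every integer k ≥ 1 and every edge-coloured graph G, the homomorphism density of the alternating path P_{2k}^A in G satisfies t(P_{2k}^A, G) ≤ (1/2)^{2k}. -/
/-- An edge-coloured graph: a finite vertex set with a red graph and a blue
graph whose edge sets are disjoint. -/
structure EdgeColouredGraph where
  V : Type
  fintypeV : Fintype V
  red : SimpleGraph V
  blue : SimpleGraph V
  disjoint : ∀ u v : V, ¬ (red.Adj u v ∧ blue.Adj u v)

attribute [instance] EdgeColouredGraph.fintypeV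

/-- A homomorphism of edge-coloured graphs sends red edges to red edges and
blue edges to blue edges. -/
def IsHom (H G : EdgeColouredGraph) (φ : H.V → G.V) : Prop :=
  (∀ ⦃u v⦄, H.red.Adj u v → G.red.Adj (φ u) (φ v)) ∧
  (∀ ⦃u v⦄, H.blue.Adj u v → G.blue.Adj (φ u) (φ v))

/-- The number of homomorphisms from `H` to `G`. -/
noncomputable def homCount (H G : EdgeColouredGraph) : ℕ :=
  Nat.card {φ : H.V → G.V // IsHom H G φ}

/-- The homomorphism density `t(H,G)`. -/
noncomputable def homDensity (H G : EdgeColouredGraph) : ℝ :=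
  (homCount H G : ℝ) / (Nat.card G.V : ℝ) ^ (Nat.card H.V)

/-- The alternating path `P_k^A`, with vertices `v_0, …, v_k`, the edge
`v_i v_{i+1}` being red for even `i` and blue for odd `i`. -/
def altPath (k : ℕ) : EdgeColouredGraph where
  V := Fin (k + 1)
  fintypeV := inferInstance
  red := SimpleGraph.fromRel (fun i j => (i : ℕ) + 1 = (j : ℕ) ∧ Even (i : ℕ))
  blue := SimpleGraph.fromRel (fun i j => (i : ℕ) + 1 = (j : ℕ) ∧ Odd (i : ℕ))
  disjoint := by
    rintro u v ⟨⟨-, hr⟩, ⟨-, hb⟩⟩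
    rcases hr with ⟨h1, h2⟩ | ⟨h1, h2⟩ <;> rcases hb with ⟨h3, h4⟩ | ⟨h3, h4⟩ <;>
      simp only [Nat.even_iff, Nat.odd_iff] at h2 h4 <;> omega

/-- The number of red edges of `F`. -/
noncomputable def eRed (F : EdgeColouredGraph) : ℕ := Nat.card F.red.edgeSet

/-- The number of blue edges of `F`. -/
noncomputable def eBlue (F : EdgeColouredGraph) : ℕ := Nat.card F.blue.edgeSet

/-- The total number of edges of `F`. -/
noncomputable def eTotal (F : EdgeColouredGraph) : ℕ := eRed F + eBlue F

/-!
With `A`, `B` the red and blue adjacency matrices of `G`, the homomorphisms of `P_{2k}^A` are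
the alternating walks, so `hom(P_{2k}^A, G) = 𝟙ᵀ (A B)^k 𝟙`. Since `A` is symmetric and
`A + B ≤ J` entrywise, `|⟨z, A B z⟩| = |⟨A z, B z⟩| ≤ ∑_v (A|z|)_v (B|z|)_v`, and each term is at
most `(∑ |z|)² / 4` by AM-GM; Cauchy–Schwarz then bounds the numerical radius of `A B` by
`n² / 4`. Berger's power inequality `w(T^k) ≤ w(T)^k` (in Pearcy's proof) gives
`𝟙ᵀ (A B)^k 𝟙 ≤ (n² / 4)^k n`.
-/

open Matrix Finset Complex

section NumericalRadius

variable {ι : Type*} [Fintype ι]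

/-- `w(T) ≤ c`, where `w(T) = sup_{‖z‖ = 1} |z* T z|` is the numerical radius. -/
def NumericalRadiusLE (T : Matrix ι ι ℂ) (c : ℝ) : Prop :=
  ∀ z : ι → ℂ, ‖star z ⬝ᵥ (T *ᵥ z)‖ ≤ c * ∑ v, ‖z v‖ ^ 2

lemma star_dotProduct_self_eq (z : ι → ℂ) : star z ⬝ᵥ z = ((∑ v, ‖z v‖ ^ 2 : ℝ) : ℂ) := by
  simp [dotProduct, conj_mul']

lemma NumericalRadiusLE.smul {T : Matrix ι ι ℂ} {c : ℝ} (hT : NumericalRadiusLE T c) (a : ℂ) :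
    NumericalRadiusLE (a • T) (‖a‖ * c) := fun z => by
  rw [smul_mulVec, dotProduct_smul, smul_eq_mul, norm_mul, mul_assoc]
  exact mul_le_mul_of_nonneg_left (hT z) (norm_nonneg a)

lemma sum_pow_smul_sub_smul_mulVec [DecidableEq ι] {R : Type*} [CommRing R] (T : Matrix ι ι R)
    (z : ι → R) (a : R) (k : ℕ) :
    ∑ i ∈ range k, a ^ i • (T ^ i *ᵥ z) - a • (T *ᵥ ∑ i ∈ range k, a ^ i • (T ^ i *ᵥ z)) =
      z - a ^ k • (T ^ k *ᵥ z) := by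
  have hshift : a • (T *ᵥ ∑ i ∈ range k, a ^ i • (T ^ i *ᵥ z)) =
      ∑ i ∈ range k, a ^ (i + 1) • (T ^ (i + 1) *ᵥ z) := by
    simp only [mulVec_sum, mulVec_smul, mulVec_mulVec, smul_sum, smul_smul, pow_succ']
  rw [hshift, ← sum_sub_distrib, sum_range_sub' (fun i => a ^ i • (T ^ i *ᵥ z)), pow_zero,
    pow_zero, one_smul, one_mulVec]

lemma IsPrimitiveRoot.sum_sum_pow_mul_smul {K M : Type*} [Field K] [AddCommGroup M] [Module K M]
    {ω : K} {k : ℕ} (hω : IsPrimitiveRoot ω k) (u : K) (X : ℕ → M) :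
    ∑ j ∈ range k, ∑ i ∈ range k, (ω ^ j * u) ^ i • X i = (k : K) • X 0 := by
  rcases Nat.eq_zero_or_pos k with rfl | hk
  · simp
  have hinner : ∀ i ∈ range k, ∑ j ∈ range k, (ω ^ j * u) ^ i • X i =
      ((∑ j ∈ range k, (ω ^ i) ^ j) * u ^ i) • X i := fun i _ => by
    rw [← sum_smul, sum_mul]
    simp only [mul_pow, pow_right_comm]
  rw [sum_comm, sum_congr rfl hinner, sum_eq_single_of_mem 0 (mem_range.2 hk)]
  · simp
  · intro i hi hi0
    rw [geom_sum_eq (hω.pow_ne_one_of_pos_of_lt hi0 (mem_range.1 hi)), ← pow_right_comm,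
      hω.pow_eq_one, one_pow, sub_self, zero_div, zero_mul, zero_smul]

lemma NumericalRadiusLE.re_star_dotProduct_sub_smul_mulVec_nonneg {T : Matrix ι ι ℂ}
    (hT : NumericalRadiusLE T 1) {a : ℂ} (ha : ‖a‖ ≤ 1) (y : ι → ℂ) :
    0 ≤ (star y ⬝ᵥ (y - a • (T *ᵥ y))).re := by
  have h := hT y
  rw [dotProduct_sub, dotProduct_smul, star_dotProduct_self_eq, smul_eq_mul, sub_re, ofReal_re,
    sub_nonneg]
  calc (a * (star y ⬝ᵥ (T *ᵥ y))).re ≤ ‖a‖ * ‖star y ⬝ᵥ (T *ᵥ y)‖ := by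
        rw [← norm_mul]; exact re_le_norm _
    _ ≤ 1 * (1 * ∑ v, ‖y v‖ ^ 2) := by gcongr
    _ = ∑ v, ‖y v‖ ^ 2 := by ring

/-- Pearcy: `y_a := ∑_{i<k} a^i T^i z` satisfies `y_a - a T y_a = z - u^k T^k z` for each
`k`-th root `a` of `u^k`, and these `y_a` average to `z`. -/
lemma NumericalRadiusLE.re_star_dotProduct_sub_pow_smul_mulVec_nonneg [DecidableEq ι]
    {T : Matrix ι ι ℂ} (hT : NumericalRadiusLE T 1) {u : ℂ} (hu : ‖u‖ ≤ 1) (k : ℕ) (z : ι → ℂ) :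
    0 ≤ (star z ⬝ᵥ (z - u ^ k • (T ^ k *ᵥ z))).re := by
  obtain rfl | hk := eq_or_ne k 0
  · simp
  set ω : ℂ := exp (2 * Real.pi * I / k)
  have hω : IsPrimitiveRoot ω k := isPrimitiveRoot_exp k hk
  set y : ℕ → ι → ℂ := fun j => ∑ i ∈ range k, (ω ^ j * u) ^ i • (T ^ i *ᵥ z)
  have hy : ∀ j, y j - (ω ^ j * u) • (T *ᵥ y j) = z - u ^ k • (T ^ k *ᵥ z) := fun j => by
    rw [sum_pow_smul_sub_smul_mulVec, mul_pow, ← pow_right_comm, hω.pow_eq_one, one_pow, one_mul]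
  have hsum : ∑ j ∈ range k, y j = (k : ℂ) • z := by
    simpa using hω.sum_sum_pow_mul_smul u (fun i => T ^ i *ᵥ z)
  have hnorm : ∀ j, ‖ω ^ j * u‖ ≤ 1 := fun j => by
    rw [norm_mul, norm_pow, hω.norm'_eq_one hk, one_pow, one_mul]; exact hu
  have hkpos : (0 : ℝ) < k := by positivity
  have key : (k : ℝ) * (star z ⬝ᵥ (z - u ^ k • (T ^ k *ᵥ z))).re =
      ∑ j ∈ range k, (star (y j) ⬝ᵥ (y j - (ω ^ j * u) • (T *ᵥ y j))).re := by
    simp only [hy, ← re_sum, ← sum_dotProduct, ← star_sum, hsum, star_smul, star_natCast,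
      smul_dotProduct, smul_eq_mul]
    rw [← ofReal_natCast, re_ofReal_mul]
  refine nonneg_of_mul_nonneg_right ?_ hkpos
  rw [key]
  exact sum_nonneg fun j _ => hT.re_star_dotProduct_sub_smul_mulVec_nonneg (hnorm j) (y j)

/-- Berger's power inequality `w(T ^ k) ≤ w(T) ^ k`, normalised to `w(T) ≤ 1`. -/
theorem NumericalRadiusLE.pow_of_le_one [DecidableEq ι] {T : Matrix ι ι ℂ}
    (hT : NumericalRadiusLE T 1) (k : ℕ) : NumericalRadiusLE (T ^ k) 1 := by
  intro z
  obtain rfl | hk := eq_or_ne k 0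
  · rw [pow_zero, one_mulVec, star_dotProduct_self_eq, norm_real,
      Real.norm_of_nonneg (by positivity), one_mul]
  set φ := star z ⬝ᵥ (T ^ k *ᵥ z)
  obtain hφ | hφ := eq_or_ne φ 0
  · rw [hφ, norm_zero]; positivity
  -- rotate `φ` onto the positive real axis by a unimodular `u ^ k`
  obtain ⟨u, hu⟩ := IsAlgClosed.exists_pow_nat_eq ((‖φ‖ : ℂ) / φ) (Nat.pos_of_ne_zero hk)
  have hu_norm : ‖u‖ = 1 := by
    refine (pow_eq_one_iff_of_nonneg (norm_nonneg u) hk).1 ?_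
    rw [← norm_pow, hu, norm_div, norm_real, norm_norm, div_self (norm_ne_zero_iff.2 hφ)]
  have h := hT.re_star_dotProduct_sub_pow_smul_mulVec_nonneg hu_norm.le k z
  rw [dotProduct_sub, dotProduct_smul, star_dotProduct_self_eq, smul_eq_mul, hu,
    div_mul_cancel₀ _ hφ, sub_re, ofReal_re, ofReal_re, sub_nonneg] at h
  linarith

theorem NumericalRadiusLE.pow [DecidableEq ι] {T : Matrix ι ι ℂ} {c : ℝ}
    (hT : NumericalRadiusLE T c) (hc : 0 < c) (k : ℕ) : NumericalRadiusLE (T ^ k) (c ^ k) := by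
  have hc' : (c : ℂ) ≠ 0 := ofReal_ne_zero.2 hc.ne'
  have h1 : NumericalRadiusLE ((c : ℂ)⁻¹ • T) 1 := by
    simpa [abs_of_pos hc, hc.ne'] using hT.smul (c : ℂ)⁻¹
  have hTk : T ^ k = (c : ℂ) ^ k • ((c : ℂ)⁻¹ • T) ^ k := by
    rw [smul_pow, smul_smul, ← mul_pow, mul_inv_cancel₀ hc', one_pow, one_smul]
  simpa [hTk, abs_of_pos hc] using (h1.pow_of_le_one k).smul ((c : ℂ) ^ k)

lemma norm_mulVec_apply_le {m : Type*} (A : Matrix m ι ℂ) (z : ι → ℂ) (v : m) :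
    ‖(A *ᵥ z) v‖ ≤ ∑ u, ‖A v u‖ * ‖z u‖ :=
  (norm_sum_le _ _).trans_eq (by simp only [norm_mul])

lemma norm_star_dotProduct_le (x w : ι → ℂ) : ‖star x ⬝ᵥ w‖ ≤ ∑ v, ‖x v‖ * ‖w v‖ :=
  (norm_sum_le _ _).trans_eq (by simp)

theorem numericalRadiusLE_mul {A B : Matrix ι ι ℂ} (hA : A.IsHermitian)
    (hAB : ∀ u v, ‖A u v‖ + ‖B u v‖ ≤ 1) :
    NumericalRadiusLE (A * B) (Fintype.card ι ^ 2 / 4) := by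
  intro z
  set S := ∑ u, ‖z u‖
  set a : ι → ℝ := fun v => ∑ u, ‖A v u‖ * ‖z u‖
  set b : ι → ℝ := fun v => ∑ u, ‖B v u‖ * ‖z u‖
  have ha : ∀ v, 0 ≤ a v := fun v => by positivity
  have hb : ∀ v, 0 ≤ b v := fun v => by positivity
  have hab : ∀ v, a v + b v ≤ S := fun v => by
    simp only [a, b, S, ← sum_add_distrib, ← add_mul]
    exact sum_le_sum fun u _ => mul_le_of_le_one_left (norm_nonneg _) (hAB v u)
  have hAz : star z ⬝ᵥ ((A * B) *ᵥ z) = star (A *ᵥ z) ⬝ᵥ (B *ᵥ z) := by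
    rw [← mulVec_mulVec, dotProduct_mulVec, star_mulVec, hA.eq]
  calc ‖star z ⬝ᵥ ((A * B) *ᵥ z)‖ ≤ ∑ v, a v * b v := by
        rw [hAz]
        refine (norm_star_dotProduct_le _ _).trans (sum_le_sum fun v _ => ?_)
        exact mul_le_mul (norm_mulVec_apply_le A z v) (norm_mulVec_apply_le B z v)
          (norm_nonneg _) (ha v)
    _ ≤ ∑ _v : ι, S ^ 2 / 4 := sum_le_sum fun v _ => by
        nlinarith [sq_nonneg (a v - b v), hab v, ha v, hb v]
    _ = Fintype.card ι * S ^ 2 / 4 := by simp [mul_div_assoc]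
    _ ≤ Fintype.card ι ^ 2 / 4 * ∑ v, ‖z v‖ ^ 2 := by
        have := sq_sum_le_card_mul_sum_sq (s := univ) (f := fun u => ‖z u‖)
        rw [card_univ] at this
        nlinarith [this]

end NumericalRadius

section PathSum

variable {V R : Type*} [Fintype V] [DecidableEq V] [CommSemiring R]

lemma sum_mul_prod_path_eq_sum_vecMul {m : ℕ} (W : Fin m → Matrix V V R) (g : V → R) :
    ∑ x : Fin (m + 1) → V, g (x 0) * ∏ i : Fin m, W i (x i.castSucc) (x i.succ) =
      ∑ v, (g ᵥ* (List.ofFn W).prod) v := by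
  induction m generalizing g with
  | zero => simp [← (Equiv.funUnique (Fin 1) V).symm.sum_comp]
  | succ m ih =>
    calc ∑ x : Fin (m + 2) → V, g (x 0) * ∏ i : Fin (m + 1), W i (x i.castSucc) (x i.succ)
        = ∑ x' : Fin (m + 1) → V, ∑ u, g u * W 0 u (x' 0) *
            ∏ i : Fin m, W i.succ (x' i.castSucc) (x' i.succ) := by
          rw [← (Fin.consEquiv fun _ => V).sum_comp, Fintype.sum_prod_type, sum_comm]
          simp [Fin.prod_univ_succ, mul_assoc]
      _ = ∑ x' : Fin (m + 1) → V, (g ᵥ* W 0) (x' 0) *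
            ∏ i : Fin m, W i.succ (x' i.castSucc) (x' i.succ) := by
          simp only [← sum_mul, vecMul, dotProduct]
      _ = ∑ v, (g ᵥ* (List.ofFn W).prod) v := by
          rw [ih, List.ofFn_succ, List.prod_cons, vecMul_vecMul]

end PathSum

lemma prod_ofFn_alternating {M : Type*} [Monoid M] (a b : M) (k : ℕ) :
    (List.ofFn fun i : Fin (2 * k) => if Even (i : ℕ) then a else b).prod = (a * b) ^ k := by
  induction k with
  | zero => simp
  | succ k ih =>
    rw [pow_succ', ← ih]
    simp [List.ofFn_succ, Nat.even_add_one, parity_simps, mul_assoc]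

section AltPath

def altColour (G : EdgeColouredGraph) (i : ℕ) : SimpleGraph G.V :=
  if Even i then G.red else G.blue

lemma forall_fromRel_succ_adj_iff {W : Type*} {H : SimpleGraph W} {m : ℕ} {P : ℕ → Prop}
    {φ : Fin (m + 1) → W} :
    (∀ ⦃u v⦄, (SimpleGraph.fromRel fun i j : Fin (m + 1) => (i : ℕ) + 1 = j ∧ P i).Adj u v →
      H.Adj (φ u) (φ v)) ↔ ∀ i : Fin m, P i → H.Adj (φ i.castSucc) (φ i.succ) := by
  refine ⟨fun h i hi => h ?_, fun h u v huv => ?_⟩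
  · rw [SimpleGraph.fromRel_adj]
    exact ⟨Fin.castSucc_lt_succ.ne, Or.inl ⟨by simp, by simpa using hi⟩⟩
  obtain ⟨-, ⟨huv, hP⟩ | ⟨hvu, hP⟩⟩ := (SimpleGraph.fromRel_adj _ _ _).1 huv
  · convert h ⟨u, by omega⟩ hP using 2 <;> ext <;> simp [huv]
  · convert (h ⟨v, by omega⟩ hP).symm using 2 <;> ext <;> simp [hvu]

lemma isHom_altPath_iff {m : ℕ} {G : EdgeColouredGraph} {φ : Fin (m + 1) → G.V} :
    IsHom (altPath m) G φ ↔ ∀ i : Fin m, (altColour G i).Adj (φ i.castSucc) (φ i.succ) := by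
  refine (forall_fromRel_succ_adj_iff.and forall_fromRel_succ_adj_iff).trans ?_
  simp only [← forall_and, altColour, ← Nat.not_even_iff_odd]
  refine forall_congr' fun i => ?_
  by_cases hi : Even (i : ℕ) <;> simp [hi]

open scoped Classical in
lemma natCast_homCount_altPath (R : Type*) [CommSemiring R] (m : ℕ) (G : EdgeColouredGraph) :
    (homCount (altPath m) G : R) =
      ∑ x : Fin (m + 1) → G.V,
        ∏ i : Fin m, (altColour G i).adjMatrix R (x i.castSucc) (x i.succ) := by
  have e : {φ : (altPath m).V → G.V // IsHom (altPath m) G φ} ≃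
      {x : Fin (m + 1) → G.V // ∀ i : Fin m, (altColour G i).Adj (x i.castSucc) (x i.succ)} :=
    Equiv.subtypeEquivRight fun _ => isHom_altPath_iff
  rw [homCount, Nat.card_congr e, Nat.card_eq_fintype_card, Fintype.card_subtype,
    natCast_card_filter]
  refine sum_congr rfl fun x _ => ?_
  simp only [SimpleGraph.adjMatrix_apply, Fintype.prod_boole]
  congr

open scoped Classical in
lemma natCast_homCount_altPath_two_mul (R : Type*) [CommSemiring R] (k : ℕ)
    (G : EdgeColouredGraph) :
    (homCount (altPath (2 * k)) G : R) =
      ∑ v, (1 ᵥ* (G.red.adjMatrix R * G.blue.adjMatrix R) ^ k) v := by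
  rw [natCast_homCount_altPath, ← prod_ofFn_alternating, ← sum_mul_prod_path_eq_sum_vecMul]
  refine sum_congr rfl fun x _ => ?_
  rw [Pi.one_apply, one_mul]
  refine prod_congr rfl fun i _ => ?_
  unfold altColour
  split_ifs <;> rfl

lemma norm_adjMatrix_red_add_norm_adjMatrix_blue_le_one (G : EdgeColouredGraph)
    [DecidableRel G.red.Adj] [DecidableRel G.blue.Adj] (u v : G.V) :
    ‖G.red.adjMatrix ℂ u v‖ + ‖G.blue.adjMatrix ℂ u v‖ ≤ 1 := by
  have := G.disjoint u v
  by_cases hr : G.red.Adj u v <;> by_cases hb : G.blue.Adj u v <;> simp_all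

end AltPath

theorem altPath_even_density_le_general (k : ℕ) (G : EdgeColouredGraph) :
    homDensity (altPath (2 * k)) G ≤ (1 / 2 : ℝ) ^ (2 * k) := by
  classical
  set n := Fintype.card G.V
  have hcard : Nat.card (altPath (2 * k)).V = 2 * k + 1 := Nat.card_fin _
  rw [homDensity, hcard, Nat.card_eq_fintype_card]
  obtain hn | hn := Nat.eq_zero_or_pos n
  · simp [n, hn]
  set M := G.red.adjMatrix ℂ * G.blue.adjMatrix ℂ
  have hcount : (homCount (altPath (2 * k)) G : ℂ) = star 1 ⬝ᵥ (M ^ k *ᵥ 1) := by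
    rw [natCast_homCount_altPath_two_mul, star_one, dotProduct_mulVec, dotProduct_one]
  have hbound := (numericalRadiusLE_mul (G.red.isHermitian_adjMatrix ℂ)
    (norm_adjMatrix_red_add_norm_adjMatrix_blue_le_one G)).pow (by positivity) k 1
  rw [← hcount, norm_natCast] at hbound
  rw [div_le_iff₀ (by positivity)]
  calc (homCount (altPath (2 * k)) G : ℝ) ≤ (n ^ 2 / 4) ^ k * n := by simpa using hbound
    _ = (1 / 2) ^ (2 * k) * n ^ (2 * k + 1) := by
      rw [pow_succ _ (2 * k), pow_mul, pow_mul, div_pow,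
        show (1 / 2 : ℝ) ^ 2 = 1 / 4 by norm_num, _root_.one_div_pow]
      ring

/-- For every `k ≥ 1` and every edge-coloured graph `G`,
`t(P_{2k}^A, G) ≤ (1/2)^{2k}`. -/
theorem altPath_even_density_le (k : ℕ) (hk : 1 ≤ k) (G : EdgeColouredGraph) :
    homDensity (altPath (2 * k)) G ≤ (1 / 2 : ℝ) ^ (2 * k) :=
  altPath_even_density_le_general k G
end

section
/- Let k ≥ 1 and let G be an edge-coloured graph with hom(P_{2k+1}^A, G) ≥ 1. Let f be a uniformly random element of the finite set Hom(P_{2k+1}^A, G) of homomorphisms from P_{2k+1}^A to G, and for 0 ≤ i ≤ 2k+1 set X_i := f(v_i). Then the Shannon entropy of f equals Σ_{i=0}^{2k} H(X_i, X_{i+1}) − Σ_{i=1}^{2k} H(X_i), where H denotes base-2 Shannon entropy. -/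
/-- The base-2 Shannon entropy of the random variable `X : Ω → S`, where `Ω` (here a finite
type) is equipped with the uniform probability measure: `H(X) = -∑_x P(X = x) log₂ P(X = x)`,
the sum effectively running over values `x` with `P(X = x) > 0` since `negMulLog 0 = 0`. -/
noncomputable def entropy {Ω S : Type*} (X : Ω → S) : ℝ :=
  ∑ᶠ s : S, Real.negMulLog ((Nat.card {ω : Ω // X ω = s} : ℝ) / (Nat.card Ω : ℝ)) / Real.log 2

set_option linter.unusedSectionVars false
set_option maxHeartbeats 2000000

open Finset

open Classical in
/-- Classical indicator of a proposition. -/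
noncomputable def ind (p : Prop) : ℕ := if p then 1 else 0

lemma ind_pos {p : Prop} (h : p) : ind p = 1 := by simp [ind, h]
lemma ind_neg {p : Prop} (h : ¬ p) : ind p = 0 := by simp [ind, h]
lemma ind_le_one (p : Prop) : ind p ≤ 1 := by
  classical by_cases h : p <;> simp [ind, h]
lemma ind_and (p q : Prop) : ind (p ∧ q) = ind p * ind q := by
  classical
  by_cases h : p <;> by_cases h' : q <;> simp [ind, h, h']

lemma ind_true_dep {p : Prop} (h : p) : ind p = 1 := ind_pos h

section Sums
variable {V : Type*} [Fintype V] {σ : Type*} [Fintype σ]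

lemma sum_ind_left (b : V) (f : V → ℕ) : ∑ v : V, ind (v = b) * f v = f b := by
  classical
  rw [Finset.sum_eq_single b]
  · simp [ind_pos]
  · intro v _ hv; simp [ind_neg hv]
  · intro h; exact absurd (Finset.mem_univ b) h

lemma sum_ind_right (b : V) (f : V → ℕ) : ∑ v : V, ind (b = v) * f v = f b := by
  classical
  rw [Finset.sum_eq_single b]
  · simp [ind_pos]
  · intro v _ hv; simp [ind_neg (Ne.symm hv)]
  · intro h; exact absurd (Finset.mem_univ b) h

lemma sum_ind_one (b : V) : ∑ v : V, ind (b = v) = 1 := by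
  have := sum_ind_right (f := fun _ => 1) b
  simpa using this

lemma card_subtype_ind (P : σ → Prop) : Nat.card {x // P x} = ∑ x : σ, ind (P x) := by
  classical
  rw [Nat.card_eq_fintype_card, Fintype.card_subtype]
  rw [Finset.card_filter]
  refine Finset.sum_congr rfl fun x _ => ?_
  by_cases h : P x <;> simp [ind, h]

/-- partition a sum according to the value of `h x`. -/
lemma sum_fiber_mul (h : σ → V) (f : V → ℕ) (g : σ → ℕ) :
    ∑ x : σ, f (h x) * g x = ∑ v : V, f v * ∑ x : σ, ind (h x = v) * g x := by
  classical
  have : ∀ x : σ, f (h x) * g x = ∑ v : V, f v * (ind (h x = v) * g x) := by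
    intro x
    rw [Finset.sum_eq_single (h x)]
    · simp [ind_pos]
    · intro v _ hv; simp [ind_neg (by exact fun e => hv e.symm : ¬ h x = v)]
    · intro hx; exact absurd (Finset.mem_univ _) hx
  simp only [this]
  rw [Finset.sum_comm]
  simp [Finset.mul_sum]

end Sums
section Walks
variable {V : Type*} [Fintype V]

/-- shift an edge system by one. -/
def shf {V : Type*} (E : ℕ → V → V → Prop) : ℕ → V → V → Prop := fun j => E (j+1)
/-- shift an edge system by `p`. -/
def shI {V : Type*} (p : ℕ) (E : ℕ → V → V → Prop) : ℕ → V → V → Prop := fun j => E (p + j)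

/-- the walk predicate: `x` is a homomorphic image of a path of length `n`. -/
def WkP (n : ℕ) (E : ℕ → V → V → Prop) (x : Fin (n+1) → V) : Prop :=
  ∀ i : Fin n, E i (x i.castSucc) (x i.succ)

/-- weighted count of walks satisfying `Q`. -/
noncomputable def wsum (n : ℕ) (E : ℕ → V → V → Prop) (Q : (Fin (n+1) → V) → Prop) : ℕ :=
  ∑ x : Fin (n+1) → V, ind (WkP n E x) * ind (Q x)

/-- backward walk counts. -/
noncomputable def Bc : (m : ℕ) → (ℕ → V → V → Prop) → V → ℕ
  | 0, _, _ => 1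
  | (m+1), E, v => ∑ w : V, ind (E 0 v w) * Bc m (shf E) w

/-- forward walk counts from `u` to `v` in `p` steps. -/
noncomputable def Af : (p : ℕ) → (ℕ → V → V → Prop) → V → V → ℕ
  | 0, _, u, v => ind (u = v)
  | (p+1), E, u, v => ∑ w : V, ind (E 0 u w) * Af p (shf E) w v

lemma wkP_zero (E : ℕ → V → V → Prop) (x : Fin 1 → V) : WkP 0 E x := fun i => i.elim0

lemma wkP_cons (n : ℕ) (E : ℕ → V → V → Prop) (v : V) (y : Fin (n+1) → V) :
    WkP (n+1) E (Fin.cons v y) ↔ E 0 v (y 0) ∧ WkP n (shf E) y := by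
  unfold WkP
  rw [Fin.forall_fin_succ]
  constructor
  · rintro ⟨h0, hs⟩
    refine ⟨?_, fun i => ?_⟩
    · simpa using h0
    · have := hs i
      rw [← Fin.succ_castSucc] at this
      simpa [Fin.cons_succ, shf] using this
  · rintro ⟨h0, hs⟩
    refine ⟨by simpa using h0, fun i => ?_⟩
    rw [← Fin.succ_castSucc]
    simpa [Fin.cons_succ, shf] using hs i

lemma sum_cons {M : Type*} [AddCommMonoid M] (n : ℕ) (F : (Fin (n+1) → V) → M) :
    ∑ x : Fin (n+1) → V, F x = ∑ v : V, ∑ y : Fin n → V, F (Fin.cons v y) := by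
  rw [← Equiv.sum_comp (Fin.consEquiv (fun _ => V)) F, Fintype.sum_prod_type]
  rfl

lemma wsum_cons (n : ℕ) (E : ℕ → V → V → Prop) (Q : (Fin (n+2) → V) → Prop) :
    wsum (n+1) E Q
      = ∑ v : V, ∑ y : Fin (n+1) → V,
          ind (E 0 v (y 0)) * ind (WkP n (shf E) y) * ind (Q (Fin.cons v y)) := by
  unfold wsum
  rw [sum_cons (n+1) (fun x => ind (WkP (n+1) E x) * ind (Q x))]
  refine Finset.sum_congr rfl fun v _ => Finset.sum_congr rfl fun y _ => ?_
  have : ind (WkP (n+1) E (Fin.cons v y)) = ind (E 0 v (y 0)) * ind (WkP n (shf E) y) := by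
    rw [show (WkP (n+1) E (Fin.cons v y)) = (E 0 v (y 0) ∧ WkP n (shf E) y) from
      propext (wkP_cons n E v y), ind_and]
  rw [this]

/-- Backward-count lemma. -/
lemma BL : ∀ (n : ℕ) (E : ℕ → V → V → Prop) (b : V),
    wsum n E (fun x => x 0 = b) = Bc n E b := by
  intro n
  induction n with
  | zero =>
    intro E b
    unfold wsum
    rw [sum_cons 0]
    simp only [Fin.cons_zero]
    have : ∀ v : V, ∑ y : Fin 0 → V, ind (WkP 0 E (Fin.cons v y)) * ind (v = b)
        = ind (v = b) := by
      intro v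
      rw [Finset.sum_congr rfl (fun y _ => by rw [ind_pos (wkP_zero E _), one_mul])]
      simp
    rw [Finset.sum_congr rfl fun v _ => this v]
    show ∑ v : V, ind (v = b) = Bc 0 E b
    have := sum_ind_left b (fun _ => 1)
    simpa [Bc] using this
  | succ n IH =>
    intro E b
    rw [wsum_cons]
    have key : ∀ v : V, ∑ y : Fin (n+1) → V,
        ind (E 0 v (y 0)) * ind (WkP n (shf E) y) * ind ((Fin.cons v y : Fin (n+2) → V) 0 = b)
        = ind (v = b) * Bc (n+1) E b := by
      intro v
      simp only [Fin.cons_zero]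
      classical
      by_cases hv : v = b
      · subst hv
        simp only [show ind (v = v) = 1 from ind_pos rfl, eq_self_iff_true,
          show ind True = 1 from ind_pos trivial, mul_one, one_mul]
        rw [sum_fiber_mul (fun y : Fin (n+1) → V => y 0) (fun w => ind (E 0 v w))
             (fun y => ind (WkP n (shf E) y))]
        simp only [Bc]
        refine Finset.sum_congr rfl fun w _ => ?_
        congr 1
        rw [← IH (shf E) w]
        unfold wsum
        exact Finset.sum_congr rfl fun y _ => by ring
      · rw [ind_neg hv, zero_mul]
        refine Finset.sum_eq_zero fun y _ => ?_
        simp [ind_neg hv]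
    rw [Finset.sum_congr rfl fun v _ => key v]
    exact sum_ind_left b (fun _ => Bc (n+1) E b)
end Walks
section Masters
variable {V : Type*} [Fintype V]

lemma shI_zero {V : Type*} (E : ℕ → V → V → Prop) : shI 0 E = E := by
  funext j; show E (0 + j) = E j; rw [Nat.zero_add]

lemma shI_shf {V : Type*} (p : ℕ) (E : ℕ → V → V → Prop) : shI p (shf E) = shI (p+1) E := by
  funext j; show E (p + j + 1) = E (p + 1 + j); rw [Nat.add_right_comm]

lemma ind_eq_pair {α : Type*} (c u a : α) :
    ind (c = u ∧ c = a) = ind (u = a) * ind (c = a) := by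
  classical
  by_cases h1 : c = a
  · subst h1
    by_cases h2 : c = u
    · subst h2; rw [ind_pos ⟨rfl, rfl⟩, ind_pos rfl]
    · rw [ind_neg (fun hh => h2 hh.1), ind_neg (fun hh => h2 hh.symm), zero_mul]
  · rw [ind_neg (fun hh => h1 hh.2), ind_neg h1, mul_zero]

lemma ind_fun_eq {α : Type*} (P : α → Prop) (c b : α) :
    ind (P c) * ind (c = b) = ind (P b) * ind (c = b) := by
  classical
  by_cases h : c = b
  · subst h; rfl
  · rw [ind_neg h, mul_zero, mul_zero]

/-- Master single-position count. -/
lemma ML : ∀ (p n : ℕ) (hpn : p ≤ n), ∀ (E : ℕ → V → V → Prop) (u a : V),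
    wsum n E (fun x => x 0 = u ∧ x ⟨p, by omega⟩ = a)
      = Af p E u a * Bc (n - p) (shI p E) a := by
  intro p
  induction p with
  | zero =>
    intro n _ E u a
    simp only [Fin.mk_zero]
    have h1 : wsum n E (fun x => x 0 = u ∧ x 0 = a)
        = ind (u = a) * wsum n E (fun x => x 0 = a) := by
      unfold wsum
      rw [Finset.mul_sum]
      refine Finset.sum_congr rfl fun x _ => ?_
      rw [ind_eq_pair (x 0) u a]; ring
    rw [h1, BL, shI_zero, Nat.sub_zero]
    rfl
  | succ p IH =>
    rintro n hn E u a
    obtain ⟨m, rfl⟩ : ∃ m, n = m + 1 := ⟨n - 1, by omega⟩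
    have hp : p ≤ m := by omega
    have hsucc : (⟨p+1, by omega⟩ : Fin (m+2)) = Fin.succ ⟨p, by omega⟩ := rfl
    calc wsum (m+1) E (fun x => x 0 = u ∧ x ⟨p+1, by omega⟩ = a)
        = ∑ v : V, ∑ y : Fin (m+1) → V,
            ind (E 0 v (y 0)) * ind (WkP m (shf E) y)
              * ind ((Fin.cons v y : Fin (m+2) → V) 0 = u
                  ∧ (Fin.cons v y : Fin (m+2) → V) ⟨p+1, by omega⟩ = a) := by
          exact wsum_cons m E _
      _ = ∑ v : V, ind (v = u) * ∑ y : Fin (m+1) → V,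
            ind (E 0 v (y 0)) * (ind (WkP m (shf E) y) * ind (y ⟨p, by omega⟩ = a)) := by
          refine Finset.sum_congr rfl fun v _ => ?_
          rw [Finset.mul_sum]
          refine Finset.sum_congr rfl fun y _ => ?_
          rw [hsucc, Fin.cons_succ, Fin.cons_zero, ind_and]
          ring
      _ = ∑ y : Fin (m+1) → V,
            ind (E 0 u (y 0)) * (ind (WkP m (shf E) y) * ind (y ⟨p, by omega⟩ = a)) := by
          exact sum_ind_left u _
      _ = ∑ w : V, ind (E 0 u w) * ∑ y : Fin (m+1) → V,
            ind (y 0 = w) * (ind (WkP m (shf E) y) * ind (y ⟨p, by omega⟩ = a)) := by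
          exact sum_fiber_mul (fun y : Fin (m+1) → V => y 0) (fun w => ind (E 0 u w))
            (fun y => ind (WkP m (shf E) y) * ind (y ⟨p, by omega⟩ = a))
      _ = ∑ w : V, ind (E 0 u w)
            * (Af p (shf E) w a * Bc (m - p) (shI p (shf E)) a) := by
          refine Finset.sum_congr rfl fun w _ => ?_
          congr 1
          rw [← IH m hp (shf E) w a]
          unfold wsum
          refine Finset.sum_congr rfl fun y _ => ?_
          rw [ind_and]; ring
      _ = Af (p+1) E u a * Bc (m + 1 - (p+1)) (shI (p+1) E) a := by
          rw [Nat.succ_sub_succ, ← shI_shf]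
          show _ = (∑ w : V, ind (E 0 u w) * Af p (shf E) w a) * Bc (m - p) (shI p (shf E)) a
          rw [Finset.sum_mul]
          exact Finset.sum_congr rfl fun w _ => by ring

set_option maxHeartbeats 16000000 in
/-- Master adjacent-pair count. -/
lemma ML2 : ∀ (p n : ℕ) (hpn : p + 1 ≤ n), ∀ (E : ℕ → V → V → Prop) (u a b : V),
    wsum n E (fun x => x 0 = u ∧ x ⟨p, by omega⟩ = a ∧ x ⟨p+1, by omega⟩ = b)
      = Af p E u a * (ind (E p a b) * Bc (n - (p+1)) (shI (p+1) E) b) := by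
  intro p
  induction p with
  | zero =>
    rintro n hn E u a b
    obtain ⟨m, rfl⟩ : ∃ m, n = m + 1 := ⟨n - 1, by omega⟩
    have hsucc : (⟨1, by omega⟩ : Fin (m+2)) = Fin.succ ⟨0, by omega⟩ := rfl
    calc wsum (m+1) E (fun x => x 0 = u ∧ x ⟨0, by omega⟩ = a ∧ x ⟨1, by omega⟩ = b)
        = ∑ v : V, ∑ y : Fin (m+1) → V,
            ind (E 0 v (y 0)) * ind (WkP m (shf E) y)
              * ind ((Fin.cons v y : Fin (m+2) → V) 0 = u
                  ∧ (Fin.cons v y : Fin (m+2) → V) ⟨0, by omega⟩ = a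
                  ∧ (Fin.cons v y : Fin (m+2) → V) ⟨1, by omega⟩ = b) := by
          exact wsum_cons m E _
      _ = ∑ v : V, ind (v = u) * ind (v = a) * ∑ y : Fin (m+1) → V,
            ind (E 0 v (y 0)) * ind (y 0 = b) * ind (WkP m (shf E) y) := by
          refine Finset.sum_congr rfl fun v _ => ?_
          rw [Finset.mul_sum]
          refine Finset.sum_congr rfl fun y _ => ?_
          rw [hsucc, Fin.cons_succ, Fin.mk_zero, Fin.cons_zero, Fin.mk_zero, ind_and, ind_and]
          ring
      _ = ∑ v : V, ind (v = u) * (ind (u = a) * ∑ y : Fin (m+1) → V,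
            ind (E 0 a (y 0)) * ind (y 0 = b) * ind (WkP m (shf E) y)) := by
          classical
          refine Finset.sum_congr rfl fun v _ => ?_
          by_cases hv : v = u
          · subst hv; rw [ind_pos rfl, one_mul, one_mul]
            by_cases hva : v = a
            · subst hva; rfl
            · rw [ind_neg hva]; simp
          · simp [ind_neg hv]
      _ = ind (u = a) * ∑ y : Fin (m+1) → V,
            ind (E 0 a (y 0)) * ind (y 0 = b) * ind (WkP m (shf E) y) := by
          exact sum_ind_left u _
      _ = ind (u = a) * (ind (E 0 a b) * ∑ y : Fin (m+1) → V,
            ind (WkP m (shf E) y) * ind (y 0 = b)) := by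
          congr 1
          rw [Finset.mul_sum]
          refine Finset.sum_congr rfl fun y _ => ?_
          rw [ind_fun_eq (fun c => E 0 a c) (y 0) b]
          ring
      _ = Af 0 E u a * (ind (E 0 a b) * Bc (m + 1 - 1) (shI 1 E) b) := by
          have h1 : shI 1 E = shf E := by
            funext j; show E (1 + j) = E (j + 1); rw [Nat.add_comm]
          rw [show (fun y : Fin (m+1) → V =>
              ind (WkP m (shf E) y) * ind (y 0 = b)) = fun y =>
              ind (WkP m (shf E) y) * ind (y 0 = b) from rfl]
          have h2 : ∑ y : Fin (m+1) → V, ind (WkP m (shf E) y) * ind (y 0 = b)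
              = Bc m (shf E) b := BL m (shf E) b
          rw [h2, h1, Nat.succ_sub_one]
          rfl
  | succ p IH =>
    rintro n hn E u a b
    obtain ⟨m, rfl⟩ : ∃ m, n = m + 1 := ⟨n - 1, by omega⟩
    have hp : p + 1 ≤ m := by omega
    have hs1 : (⟨p+1, by omega⟩ : Fin (m+2)) = Fin.succ ⟨p, by omega⟩ := rfl
    have hs2 : (⟨p+1+1, by omega⟩ : Fin (m+2)) = Fin.succ ⟨p+1, by omega⟩ := rfl
    calc wsum (m+1) E (fun x => x 0 = u ∧ x ⟨p+1, by omega⟩ = a ∧ x ⟨p+1+1, by omega⟩ = b)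
        = ∑ v : V, ∑ y : Fin (m+1) → V,
            ind (E 0 v (y 0)) * ind (WkP m (shf E) y)
              * ind ((Fin.cons v y : Fin (m+2) → V) 0 = u
                  ∧ (Fin.cons v y : Fin (m+2) → V) ⟨p+1, by omega⟩ = a
                  ∧ (Fin.cons v y : Fin (m+2) → V) ⟨p+1+1, by omega⟩ = b) := by
          exact wsum_cons m E _
      _ = ∑ v : V, ind (v = u) * ∑ y : Fin (m+1) → V,
            ind (E 0 v (y 0)) * (ind (WkP m (shf E) y)
              * (ind (y ⟨p, by omega⟩ = a) * ind (y ⟨p+1, by omega⟩ = b))) := by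
          refine Finset.sum_congr rfl fun v _ => ?_
          rw [Finset.mul_sum]
          refine Finset.sum_congr rfl fun y _ => ?_
          simp only [hs1, hs2, Fin.cons_succ, Fin.cons_zero, ind_and]
          ring
      _ = ∑ y : Fin (m+1) → V,
            ind (E 0 u (y 0)) * (ind (WkP m (shf E) y)
              * (ind (y ⟨p, by omega⟩ = a) * ind (y ⟨p+1, by omega⟩ = b))) := by
          exact sum_ind_left u _
      _ = ∑ w : V, ind (E 0 u w) * ∑ y : Fin (m+1) → V,
            ind (y 0 = w) * (ind (WkP m (shf E) y)
              * (ind (y ⟨p, by omega⟩ = a) * ind (y ⟨p+1, by omega⟩ = b))) := by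
          exact sum_fiber_mul (fun y : Fin (m+1) → V => y 0) (fun w => ind (E 0 u w))
            (fun y => ind (WkP m (shf E) y)
              * (ind (y ⟨p, by omega⟩ = a) * ind (y ⟨p+1, by omega⟩ = b)))
      _ = ∑ w : V, ind (E 0 u w)
            * (Af p (shf E) w a * (ind (E (p+1) a b) * Bc (m - (p+1)) (shI (p+1) (shf E)) b)) := by
          refine Finset.sum_congr rfl fun w _ => ?_
          congr 1
          have h4 : ∑ y : Fin (m+1) → V,
              ind (y 0 = w) * (ind (WkP m (shf E) y)
                * (ind (y ⟨p, by omega⟩ = a) * ind (y ⟨p+1, by omega⟩ = b)))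
              = wsum m (shf E)
                  (fun y => y 0 = w ∧ y ⟨p, by omega⟩ = a ∧ y ⟨p+1, by omega⟩ = b) := by
            unfold wsum
            refine Finset.sum_congr rfl fun y _ => ?_
            rw [ind_and, ind_and]; ring
          exact h4.trans (IH m hp (shf E) w a b)
      _ = Af (p+1) E u a * (ind (E (p+1) a b) * Bc (m + 1 - (p+1+1)) (shI (p+1+1) E) b) := by
          rw [Nat.succ_sub_succ, ← shI_shf (p+1)]
          show _ = (∑ w : V, ind (E 0 u w) * Af p (shf E) w a) * _
          rw [Finset.sum_mul]
          exact Finset.sum_congr rfl fun w _ => by ring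

end Masters
section Derived
variable {V : Type*} [Fintype V]

/-- number of walks ending at `v` after `p` steps -/
noncomputable def Acnt (E : ℕ → V → V → Prop) (p : ℕ) (v : V) : ℕ := ∑ u : V, Af p E u v
/-- number of walk-continuations from `v` at position `p` (out of `n` steps) -/
noncomputable def Bcnt (n : ℕ) (E : ℕ → V → V → Prop) (p : ℕ) (v : V) : ℕ :=
  Bc (n - p) (shI p E) v

lemma wsum_congr (n : ℕ) (E : ℕ → V → V → Prop) {Q R : (Fin (n+1) → V) → Prop}
    (h : ∀ x, Q x ↔ R x) : wsum n E Q = wsum n E R := by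
  unfold wsum
  exact Finset.sum_congr rfl fun x _ => by rw [propext (h x)]

lemma wsum_ins (n : ℕ) (E : ℕ → V → V → Prop) (Q : (Fin (n+1) → V) → Prop) :
    wsum n E Q = ∑ u : V, wsum n E (fun x => x 0 = u ∧ Q x) := by
  unfold wsum
  rw [Finset.sum_comm]
  refine Finset.sum_congr rfl fun x _ => ?_
  have : ∀ u : V, ind (WkP n E x) * ind (x 0 = u ∧ Q x)
      = ind (x 0 = u) * (ind (WkP n E x) * ind (Q x)) := by
    intro u; rw [ind_and]; ring
  rw [Finset.sum_congr rfl fun u _ => this u, ← Finset.sum_mul]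
  rw [show ∑ u : V, ind (x 0 = u) = 1 from sum_ind_one (x 0), one_mul]

/-- vertex-count. -/
lemma D1 (n : ℕ) (E : ℕ → V → V → Prop) (q : Fin (n+1)) (v : V) :
    wsum n E (fun x => x q = v) = Acnt E ↑q v * Bcnt n E ↑q v := by
  rw [wsum_ins]
  have hq : (q : ℕ) ≤ n := by omega
  have : ∀ u : V, wsum n E (fun x => x 0 = u ∧ x q = v)
      = Af (↑q) E u v * Bc (n - ↑q) (shI ↑q E) v := by
    intro u
    rw [← ML ↑q n hq E u v]
  rw [Finset.sum_congr rfl fun u _ => this u, ← Finset.sum_mul]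
  rfl

/-- pair-count. -/
lemma D2 (n : ℕ) (E : ℕ → V → V → Prop) (q : Fin n) (u v : V) :
    wsum n E (fun x => x q.castSucc = u ∧ x q.succ = v)
      = Acnt E ↑q u * (ind (E ↑q u v) * Bcnt n E (↑q+1) v) := by
  rw [wsum_ins]
  have hq : (q : ℕ) + 1 ≤ n := by omega
  have key : ∀ w : V, wsum n E (fun x => x 0 = w ∧ x q.castSucc = u ∧ x q.succ = v)
      = Af (↑q) E w u * (ind (E ↑q u v) * Bc (n - (↑q+1)) (shI (↑q+1) E) v) := by
    intro w
    rw [← ML2 ↑q n hq E w u v]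
    refine wsum_congr n E fun x => ?_
    have h1 : (⟨↑q, by omega⟩ : Fin (n+1)) = q.castSucc := by
      apply Fin.ext; simp
    have h2 : (⟨↑q+1, by omega⟩ : Fin (n+1)) = q.succ := by
      apply Fin.ext; simp
    rw [h1, h2]
  rw [Finset.sum_congr rfl fun w _ => key w, ← Finset.sum_mul]
  rfl

/-- total count. -/
lemma D3 (n : ℕ) (E : ℕ → V → V → Prop) (q : Fin (n+1)) :
    ∑ v : V, wsum n E (fun x => x q = v) = wsum n E (fun _ => True) := by
  unfold wsum
  rw [Finset.sum_comm]
  refine Finset.sum_congr rfl fun x _ => ?_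
  rw [← Finset.mul_sum]
  rw [show ∑ v : V, ind (x q = v) = 1 from sum_ind_one (x q)]
  rw [ind_pos trivial]

/-- marginal over the second coordinate. -/
lemma D4a (n : ℕ) (E : ℕ → V → V → Prop) (q : Fin n) (u : V) :
    ∑ v : V, wsum n E (fun x => x q.castSucc = u ∧ x q.succ = v)
      = wsum n E (fun x => x q.castSucc = u) := by
  unfold wsum
  rw [Finset.sum_comm]
  refine Finset.sum_congr rfl fun x _ => ?_
  have : ∀ v : V, ind (WkP n E x) * ind (x q.castSucc = u ∧ x q.succ = v)
      = (ind (WkP n E x) * ind (x q.castSucc = u)) * ind (x q.succ = v) := by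
    intro v; rw [ind_and]; ring
  rw [Finset.sum_congr rfl fun v _ => this v, ← Finset.mul_sum]
  rw [show ∑ v : V, ind (x q.succ = v) = 1 from sum_ind_one _, mul_one]

/-- marginal over the first coordinate. -/
lemma D4b (n : ℕ) (E : ℕ → V → V → Prop) (q : Fin n) (v : V) :
    ∑ u : V, wsum n E (fun x => x q.castSucc = u ∧ x q.succ = v)
      = wsum n E (fun x => x q.succ = v) := by
  unfold wsum
  rw [Finset.sum_comm]
  refine Finset.sum_congr rfl fun x _ => ?_
  have : ∀ u : V, ind (WkP n E x) * ind (x q.castSucc = u ∧ x q.succ = v)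
      = (ind (WkP n E x) * ind (x q.succ = v)) * ind (x q.castSucc = u) := by
    intro u; rw [ind_and]; ring
  rw [Finset.sum_congr rfl fun u _ => this u, ← Finset.mul_sum]
  rw [show ∑ u : V, ind (x q.castSucc = u) = 1 from sum_ind_one _, mul_one]

lemma Acnt_zero (E : ℕ → V → V → Prop) (v : V) : Acnt E 0 v = 1 := by
  unfold Acnt
  have := sum_ind_left v (fun _ => 1)
  simpa [Af] using this

lemma Bcnt_last (n : ℕ) (E : ℕ → V → V → Prop) (v : V) : Bcnt n E n v = 1 := by
  unfold Bcnt
  rw [Nat.sub_self]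
  rfl

/-- total count via any position. -/
lemma D7 (n : ℕ) (E : ℕ → V → V → Prop) (q : Fin (n+1)) :
    ∑ v : V, (Acnt E ↑q v * Bcnt n E ↑q v) = wsum n E (fun _ => True) := by
  rw [← D3 n E q]
  exact Finset.sum_congr rfl fun v _ => (D1 n E q v).symm

end Derived
section EntropyCore
open Real

lemma key3 (a e b N : ℕ) (hN : N ≠ 0) (he : e ≤ 1) :
    Real.negMulLog (((a * (e * b) : ℕ) : ℝ) / (N : ℝ))
      = (((a * (e * b) : ℕ) : ℝ) / (N : ℝ))
          * (Real.log N - Real.log a - Real.log b) := by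
  by_cases hz : a * (e * b) = 0
  · rw [hz]
    norm_num [Real.negMulLog_zero]
  · have ha : a ≠ 0 := by rintro rfl; simp at hz
    have hb : b ≠ 0 := by rintro rfl; simp at hz
    have he0 : e = 1 := by
      rcases Nat.eq_zero_or_pos e with h | h
      · subst h; simp at hz
      · omega
    subst he0
    have haR : ((a : ℝ)) ≠ 0 := Nat.cast_ne_zero.mpr ha
    have hbR : ((b : ℝ)) ≠ 0 := Nat.cast_ne_zero.mpr hb
    have hNR : ((N : ℝ)) ≠ 0 := Nat.cast_ne_zero.mpr hN
    have hlog : Real.log (((a * (1 * b) : ℕ) : ℝ) / (N : ℝ))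
        = Real.log a + Real.log b - Real.log N := by
      push_cast
      rw [one_mul, Real.log_div (mul_ne_zero haR hbR) hNR, Real.log_mul haR hbR]
    rw [Real.negMulLog, hlog]
    ring

lemma key2 (a b N : ℕ) (hN : N ≠ 0) :
    Real.negMulLog (((a * b : ℕ) : ℝ) / (N : ℝ))
      = (((a * b : ℕ) : ℝ) / (N : ℝ)) * (Real.log N - Real.log a - Real.log b) := by
  have := key3 a 1 b N hN le_rfl
  rw [one_mul] at this
  exact this

end EntropyCore

section EntropyWalk
variable {V : Type*} [Fintype V]

lemma card_walks (n : ℕ) (E : ℕ → V → V → Prop) :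
    Nat.card {x : Fin (n+1) → V // WkP n E x} = wsum n E (fun _ => True) := by
  rw [card_subtype_ind]
  unfold wsum
  exact Finset.sum_congr rfl fun x _ => by rw [ind_pos trivial, mul_one]

lemma card_fiber (n : ℕ) (E : ℕ → V → V → Prop) (Q : (Fin (n+1) → V) → Prop) :
    Nat.card {y : {x : Fin (n+1) → V // WkP n E x} // Q y.1} = wsum n E Q := by
  rw [Nat.card_congr (Equiv.subtypeSubtypeEquivSubtypeInter (WkP n E) Q)]
  rw [card_subtype_ind]
  unfold wsum
  exact Finset.sum_congr rfl fun x _ => ind_and _ _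

/-- `∑_u P(X_p = u) log A_p(u)`, unnormalised formulation. -/
noncomputable def alphaF (n : ℕ) (E : ℕ → V → V → Prop) (p : ℕ) : ℝ :=
  ∑ u : V, ((Acnt E p u * Bcnt n E p u : ℕ) : ℝ) / ((wsum n E (fun _ => True) : ℕ) : ℝ)
    * Real.log (Acnt E p u)

noncomputable def betaF (n : ℕ) (E : ℕ → V → V → Prop) (p : ℕ) : ℝ :=
  ∑ u : V, ((Acnt E p u * Bcnt n E p u : ℕ) : ℝ) / ((wsum n E (fun _ => True) : ℕ) : ℝ)
    * Real.log (Bcnt n E p u)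

lemma alphaF_zero (n : ℕ) (E : ℕ → V → V → Prop) : alphaF n E 0 = 0 := by
  unfold alphaF
  refine Finset.sum_eq_zero fun u _ => ?_
  rw [Acnt_zero]
  norm_num

lemma betaF_last (n : ℕ) (E : ℕ → V → V → Prop) : betaF n E n = 0 := by
  unfold betaF
  refine Finset.sum_eq_zero fun u _ => ?_
  rw [Bcnt_last]
  norm_num

lemma entropy_vertex (n : ℕ) (E : ℕ → V → V → Prop)
    (hne : wsum n E (fun _ => True) ≠ 0) (q : Fin (n+1)) :
    entropy (fun x : {x : Fin (n+1) → V // WkP n E x} => x.1 q)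
      = (Real.log (wsum n E (fun _ => True)) - alphaF n E ↑q - betaF n E ↑q)
          / Real.log 2 := by
  unfold entropy
  rw [finsum_eq_sum_of_fintype]
  have hcard : ∀ v : V, Nat.card {y : {x : Fin (n+1) → V // WkP n E x} // y.1 q = v}
      = Acnt E ↑q v * Bcnt n E ↑q v := fun v => by
    rw [card_fiber n E (fun x => x q = v), D1]
  have hΩ : Nat.card {x : Fin (n+1) → V // WkP n E x} = wsum n E (fun _ => True) :=
    card_walks n E
  rw [← Finset.sum_div]
  congr 1
  calc ∑ v : V, Real.negMulLog
        ((Nat.card {y : {x : Fin (n+1) → V // WkP n E x} // y.1 q = v} : ℝ)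
          / (Nat.card {x : Fin (n+1) → V // WkP n E x} : ℝ))
      = ∑ v : V, (((Acnt E ↑q v * Bcnt n E ↑q v : ℕ) : ℝ)
            / ((wsum n E (fun _ => True) : ℕ) : ℝ))
          * (Real.log (wsum n E (fun _ => True)) - Real.log (Acnt E ↑q v)
              - Real.log (Bcnt n E ↑q v)) := by
        refine Finset.sum_congr rfl fun v _ => ?_
        rw [hcard v, hΩ]
        exact key2 _ _ _ hne
    _ = (∑ v : V, (((Acnt E ↑q v * Bcnt n E ↑q v : ℕ) : ℝ)
            / ((wsum n E (fun _ => True) : ℕ) : ℝ)))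
          * Real.log (wsum n E (fun _ => True)) - alphaF n E ↑q - betaF n E ↑q := by
        unfold alphaF betaF
        rw [Finset.sum_mul, ← Finset.sum_sub_distrib, ← Finset.sum_sub_distrib]
        refine Finset.sum_congr rfl fun v _ => by ring
    _ = Real.log (wsum n E (fun _ => True)) - alphaF n E ↑q - betaF n E ↑q := by
        congr 2
        have hsum : ∑ v : V, ((Acnt E ↑q v * Bcnt n E ↑q v : ℕ) : ℝ)
            = ((wsum n E (fun _ => True) : ℕ) : ℝ) := by
          rw [← Nat.cast_sum]
          exact_mod_cast congrArg (Nat.cast (R := ℝ)) (D7 n E q)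
        rw [← Finset.sum_div, hsum, div_self (Nat.cast_ne_zero.mpr hne), one_mul]

end EntropyWalk
section EntropyPair
variable {V : Type*} [Fintype V]

lemma double_sum_eval (P : V → V → ℕ) (N : ℕ) (hN : N ≠ 0) (c : ℝ) (f g : V → ℝ)
    (FA GA : V → ℕ)
    (hMv : ∀ u, ∑ v : V, P u v = FA u) (hMu : ∀ v, ∑ u : V, P u v = GA v)
    (hTot : ∑ u : V, FA u = N) :
    ∑ s : V × V, ((P s.1 s.2 : ℝ) / (N : ℝ)) * (c - f s.1 - g s.2)
      = c - (∑ u : V, ((FA u : ℝ) / (N : ℝ)) * f u)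
          - ∑ v : V, ((GA v : ℝ) / (N : ℝ)) * g v := by
  have hNR : ((N : ℝ)) ≠ 0 := Nat.cast_ne_zero.mpr hN
  set T : V → V → ℝ := fun u v => (P u v : ℝ) / (N : ℝ) with hT
  have hv : ∀ u, ∑ v : V, T u v = (FA u : ℝ) / (N : ℝ) := by
    intro u
    rw [← Finset.sum_div, ← Nat.cast_sum, hMv u]
  have hu : ∀ v, ∑ u : V, T u v = (GA v : ℝ) / (N : ℝ) := by
    intro v
    rw [← Finset.sum_div, ← Nat.cast_sum, hMu v]
  have htot : ∑ u : V, ((FA u : ℝ) / (N : ℝ)) = 1 := by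
    rw [← Finset.sum_div, ← Nat.cast_sum, hTot, div_self hNR]
  calc ∑ s : V × V, T s.1 s.2 * (c - f s.1 - g s.2)
      = ∑ u : V, ∑ v : V, (T u v * c - T u v * f u - T u v * g v) := by
        rw [Fintype.sum_prod_type]
        exact Finset.sum_congr rfl fun u _ => Finset.sum_congr rfl fun v _ => by ring
    _ = ∑ u : V, ((FA u : ℝ) / (N : ℝ) * c - (FA u : ℝ) / (N : ℝ) * f u
          - ∑ v : V, T u v * g v) := by
        refine Finset.sum_congr rfl fun u _ => ?_
        rw [Finset.sum_sub_distrib, Finset.sum_sub_distrib, ← Finset.sum_mul,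
          ← Finset.sum_mul, hv u]
    _ = (∑ u : V, (FA u : ℝ) / (N : ℝ) * c) - (∑ u : V, (FA u : ℝ) / (N : ℝ) * f u)
          - ∑ u : V, ∑ v : V, T u v * g v := by
        rw [Finset.sum_sub_distrib, Finset.sum_sub_distrib]
    _ = c - (∑ u : V, ((FA u : ℝ) / (N : ℝ)) * f u)
          - ∑ v : V, ((GA v : ℝ) / (N : ℝ)) * g v := by
        congr 1
        · congr 1
          rw [← Finset.sum_mul, htot, one_mul]
        · rw [Finset.sum_comm]
          refine Finset.sum_congr rfl fun v _ => ?_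
          rw [← Finset.sum_mul, hu v]

lemma entropy_pair (n : ℕ) (E : ℕ → V → V → Prop)
    (hne : wsum n E (fun _ => True) ≠ 0) (q : Fin n) :
    entropy (fun x : {x : Fin (n+1) → V // WkP n E x} => (x.1 q.castSucc, x.1 q.succ))
      = (Real.log (wsum n E (fun _ => True)) - alphaF n E ↑q - betaF n E (↑q+1))
          / Real.log 2 := by
  unfold entropy
  rw [finsum_eq_sum_of_fintype]
  have hΩ : Nat.card {x : Fin (n+1) → V // WkP n E x} = wsum n E (fun _ => True) :=
    card_walks n E
  have hcard : ∀ s : V × V,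
      Nat.card {y : {x : Fin (n+1) → V // WkP n E x} // (y.1 q.castSucc, y.1 q.succ) = s}
        = Acnt E ↑q s.1 * (ind (E ↑q s.1 s.2) * Bcnt n E (↑q+1) s.2) := by
    intro s
    rw [card_fiber n E (fun x => (x q.castSucc, x q.succ) = s)]
    rw [wsum_congr n E (fun x => Prod.ext_iff)]
    exact D2 n E q s.1 s.2
  have hMv : ∀ u : V, ∑ v : V, Acnt E ↑q u * (ind (E ↑q u v) * Bcnt n E (↑q+1) v)
      = Acnt E ↑q u * Bcnt n E ↑q u := by
    intro u
    have h1 : ∀ v : V, Acnt E ↑q u * (ind (E ↑q u v) * Bcnt n E (↑q+1) v)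
        = wsum n E (fun x => x q.castSucc = u ∧ x q.succ = v) := fun v => (D2 n E q u v).symm
    rw [Finset.sum_congr rfl fun v _ => h1 v, D4a]
    have := D1 n E q.castSucc u
    rwa [Fin.coe_castSucc] at this
  have hMu : ∀ v : V, ∑ u : V, Acnt E ↑q u * (ind (E ↑q u v) * Bcnt n E (↑q+1) v)
      = Acnt E (↑q+1) v * Bcnt n E (↑q+1) v := by
    intro v
    have h1 : ∀ u : V, Acnt E ↑q u * (ind (E ↑q u v) * Bcnt n E (↑q+1) v)
        = wsum n E (fun x => x q.castSucc = u ∧ x q.succ = v) := fun u => (D2 n E q u v).symm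
    rw [Finset.sum_congr rfl fun u _ => h1 u, D4b]
    have := D1 n E q.succ v
    rwa [Fin.val_succ] at this
  have hTot : ∑ u : V, Acnt E ↑q u * Bcnt n E ↑q u = wsum n E (fun _ => True) := by
    have := D7 n E q.castSucc
    rwa [Fin.coe_castSucc] at this
  rw [← Finset.sum_div]
  congr 1
  calc ∑ s : V × V, Real.negMulLog
        ((Nat.card {y : {x : Fin (n+1) → V // WkP n E x} //
            (y.1 q.castSucc, y.1 q.succ) = s} : ℝ)
          / (Nat.card {x : Fin (n+1) → V // WkP n E x} : ℝ))
      = ∑ s : V × V,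
          (((Acnt E ↑q s.1 * (ind (E ↑q s.1 s.2) * Bcnt n E (↑q+1) s.2) : ℕ) : ℝ)
              / ((wsum n E (fun _ => True) : ℕ) : ℝ))
            * (Real.log (wsum n E (fun _ => True)) - Real.log (Acnt E ↑q s.1)
                - Real.log (Bcnt n E (↑q+1) s.2)) := by
        refine Finset.sum_congr rfl fun s _ => ?_
        rw [hcard s, hΩ]
        exact key3 _ _ _ _ hne (ind_le_one _)
    _ = Real.log (wsum n E (fun _ => True)) - alphaF n E ↑q - betaF n E (↑q+1) := by
        unfold alphaF betaF
        exact double_sum_eval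
          (fun u v => Acnt E ↑q u * (ind (E ↑q u v) * Bcnt n E (↑q+1) v))
          (wsum n E (fun _ => True)) hne
          (Real.log (wsum n E (fun _ => True)))
          (fun u => Real.log (Acnt E ↑q u))
          (fun v => Real.log (Bcnt n E (↑q+1) v))
          (fun u => Acnt E ↑q u * Bcnt n E ↑q u)
          (fun v => Acnt E (↑q+1) v * Bcnt n E (↑q+1) v)
          hMv hMu hTot

lemma entropy_id (n : ℕ) (E : ℕ → V → V → Prop)
    (hne : wsum n E (fun _ => True) ≠ 0) :
    entropy (fun x : {x : Fin (n+1) → V // WkP n E x} => x)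
      = Real.log (wsum n E (fun _ => True)) / Real.log 2 := by
  classical
  letI : Fintype {x : Fin (n+1) → V // WkP n E x} := Fintype.ofFinite _
  unfold entropy
  rw [finsum_eq_sum_of_fintype]
  have hΩ : Nat.card {x : Fin (n+1) → V // WkP n E x} = wsum n E (fun _ => True) :=
    card_walks n E
  have hone : ∀ s : {x : Fin (n+1) → V // WkP n E x},
      Nat.card {y : {x : Fin (n+1) → V // WkP n E x} // y = s} = 1 := by
    intro s
    rw [Nat.card_eq_one_iff_unique]
    exact ⟨⟨fun a b => Subtype.ext (a.2.trans b.2.symm)⟩, ⟨⟨s, rfl⟩⟩⟩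
  have hterm : ∀ s : {x : Fin (n+1) → V // WkP n E x},
      Real.negMulLog ((Nat.card {y : {x : Fin (n+1) → V // WkP n E x} // y = s} : ℝ)
          / (Nat.card {x : Fin (n+1) → V // WkP n E x} : ℝ)) / Real.log 2
        = (1 / ((wsum n E (fun _ => True) : ℕ) : ℝ))
            * Real.log (wsum n E (fun _ => True)) / Real.log 2 := by
    intro s
    rw [hone s, hΩ, Nat.cast_one]
    congr 1
    rw [Real.negMulLog, one_div, Real.log_inv]
    ring
  rw [Finset.sum_congr rfl fun s _ => hterm s]
  rw [Finset.sum_const, Finset.card_univ, ← Nat.card_eq_fintype_card, hΩ, nsmul_eq_mul]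
  have hNR : ((wsum n E (fun _ => True) : ℕ) : ℝ) ≠ 0 := Nat.cast_ne_zero.mpr hne
  rw [mul_div_assoc, ← mul_assoc, mul_one_div, div_self hNR, one_mul]

/-- The abstract main lemma for walk systems. -/
theorem AML (m : ℕ) (E : ℕ → V → V → Prop)
    (hne : wsum (m+1) E (fun _ => True) ≠ 0) :
    entropy (fun x : {x : Fin (m+2) → V // WkP (m+1) E x} => x)
      = (∑ i : Fin (m+1), entropy (fun x : {x : Fin (m+2) → V // WkP (m+1) E x} =>
            (x.1 i.castSucc, x.1 i.succ)))
        - ∑ i : Fin m, entropy (fun x : {x : Fin (m+2) → V // WkP (m+1) E x} =>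
            x.1 i.succ.castSucc) := by
  rw [entropy_id (m+1) E hne]
  have hpair : ∀ i : Fin (m+1),
      entropy (fun x : {x : Fin (m+2) → V // WkP (m+1) E x} =>
          (x.1 i.castSucc, x.1 i.succ))
        = (fun p : ℕ => (Real.log (wsum (m+1) E (fun _ => True))
            - alphaF (m+1) E p - betaF (m+1) E (p+1)) / Real.log 2) ↑i := by
    intro i
    exact entropy_pair (m+1) E hne i
  have hvert : ∀ i : Fin m,
      entropy (fun x : {x : Fin (m+2) → V // WkP (m+1) E x} => x.1 i.succ.castSucc)
        = (fun p : ℕ => (Real.log (wsum (m+1) E (fun _ => True))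
            - alphaF (m+1) E (p+1) - betaF (m+1) E (p+1)) / Real.log 2) ↑i := by
    intro i
    have h := entropy_vertex (m+1) E hne i.succ.castSucc
    have hc : (↑(i.succ.castSucc) : ℕ) = ↑i + 1 := by simp
    rwa [hc] at h
  rw [Finset.sum_congr rfl fun i _ => hpair i, Finset.sum_congr rfl fun i _ => hvert i]
  rw [Fin.sum_univ_eq_sum_range (fun p : ℕ => (Real.log (wsum (m+1) E (fun _ => True))
        - alphaF (m+1) E p - betaF (m+1) E (p+1)) / Real.log 2) (m+1),
     Fin.sum_univ_eq_sum_range (fun p : ℕ => (Real.log (wsum (m+1) E (fun _ => True))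
        - alphaF (m+1) E (p+1) - betaF (m+1) E (p+1)) / Real.log 2) m]
  set c := Real.log (wsum (m+1) E (fun _ => True))
  set F : ℕ → ℝ := fun p => alphaF (m+1) E p
  set Gg : ℕ → ℝ := fun p => betaF (m+1) E p
  have scalar : ∀ M : ℕ,
      (∑ p ∈ Finset.range (M+1), (c - F p - Gg (p+1)))
        - ∑ p ∈ Finset.range M, (c - F (p+1) - Gg (p+1))
      = c - F 0 - Gg (M+1) := by
    intro M
    induction M with
    | zero => simp
    | succ M IH =>
      rw [Finset.sum_range_succ (f := fun p => c - F p - Gg (p+1)) (n := M+1),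
        Finset.sum_range_succ (f := fun p => c - F (p+1) - Gg (p+1)) (n := M)]
      linarith [IH]
  have hdiv : ∀ (L : ℕ → ℝ) (M : ℕ), ∑ p ∈ Finset.range M, L p / Real.log 2
      = (∑ p ∈ Finset.range M, L p) / Real.log 2 := by
    intro L M
    rw [Finset.sum_div]
  rw [hdiv (fun p => c - F p - Gg (p+1)) (m+1), hdiv (fun p => c - F (p+1) - Gg (p+1)) m,
    div_sub_div_same]
  rw [scalar m]
  have hF0 : F 0 = 0 := alphaF_zero (m+1) E
  have hGlast : Gg (m+1) = 0 := betaF_last (m+1) E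
  rw [hF0, hGlast]
  ring_nf

end EntropyPair
section HomChar

/-- The edge system of the alternating path in `G`. -/
def pathE (G : EdgeColouredGraph) : ℕ → G.V → G.V → Prop :=
  fun i u v => if Even i then G.red.Adj u v else G.blue.Adj u v

lemma fin_ne (n : ℕ) (i : Fin (n+1)) : i.castSucc ≠ i.succ := by
  intro hcs
  have := congrArg Fin.val hcs
  rw [Fin.coe_castSucc, Fin.val_succ] at this
  omega

lemma isHom_iff' (n : ℕ) (G : EdgeColouredGraph) (φ : Fin (n+1+1) → G.V) :
    ((∀ u v : Fin (n+1+1), (altPath (n+1)).red.Adj u v → G.red.Adj (φ u) (φ v))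
      ∧ (∀ u v : Fin (n+1+1), (altPath (n+1)).blue.Adj u v → G.blue.Adj (φ u) (φ v)))
      ↔ WkP (n+1) (pathE G) φ := by
  have hredadj : ∀ u v : Fin (n+1+1), (altPath (n+1)).red.Adj u v ↔
      u ≠ v ∧ (((u : ℕ) + 1 = (v : ℕ) ∧ Even (u : ℕ)) ∨ ((v : ℕ) + 1 = (u : ℕ) ∧ Even (v : ℕ))) := by
    intro u v
    exact SimpleGraph.fromRel_adj _ u v
  have hblueadj : ∀ u v : Fin (n+1+1), (altPath (n+1)).blue.Adj u v ↔
      u ≠ v ∧ (((u : ℕ) + 1 = (v : ℕ) ∧ Odd (u : ℕ)) ∨ ((v : ℕ) + 1 = (u : ℕ) ∧ Odd (v : ℕ))) := by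
    intro u v
    exact SimpleGraph.fromRel_adj _ u v
  constructor
  · rintro ⟨hr, hb⟩ i
    unfold pathE
    by_cases he : Even (i : ℕ)
    · rw [if_pos he]
      apply hr
      rw [hredadj]
      exact ⟨fin_ne n i, Or.inl ⟨by rw [Fin.coe_castSucc, Fin.val_succ],
        by rwa [Fin.coe_castSucc]⟩⟩
    · rw [if_neg he]
      apply hb
      rw [hblueadj]
      exact ⟨fin_ne n i, Or.inl ⟨by rw [Fin.coe_castSucc, Fin.val_succ],
        by rw [Fin.coe_castSucc]; exact Nat.not_even_iff_odd.mp he⟩⟩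
  · intro h
    constructor
    · intro u v huv
      rw [hredadj] at huv
      obtain ⟨hne, ⟨h1, h2⟩ | ⟨h1, h2⟩⟩ := huv
      · have hu : (u : ℕ) < n + 1 := by have := v.isLt; omega
        have hi := h ⟨(u : ℕ), hu⟩
        unfold pathE at hi
        rw [if_pos (by rwa [show ((⟨(u : ℕ), hu⟩ : Fin (n+1)) : ℕ) = (u : ℕ) from rfl])] at hi
        have hcs : (⟨(u : ℕ), hu⟩ : Fin (n+1)).castSucc = u := by
          apply Fin.ext; simp
        have hsc : (⟨(u : ℕ), hu⟩ : Fin (n+1)).succ = v := by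
          apply Fin.ext; simp [h1]
        rwa [hcs, hsc] at hi
      · have hv : (v : ℕ) < n + 1 := by have := u.isLt; omega
        have hi := h ⟨(v : ℕ), hv⟩
        unfold pathE at hi
        rw [if_pos (by rwa [show ((⟨(v : ℕ), hv⟩ : Fin (n+1)) : ℕ) = (v : ℕ) from rfl])] at hi
        have hcs : (⟨(v : ℕ), hv⟩ : Fin (n+1)).castSucc = v := by
          apply Fin.ext; simp
        have hsc : (⟨(v : ℕ), hv⟩ : Fin (n+1)).succ = u := by
          apply Fin.ext; simp [h1]
        rw [hcs, hsc] at hi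
        exact hi.symm
    · intro u v huv
      rw [hblueadj] at huv
      obtain ⟨hne, ⟨h1, h2⟩ | ⟨h1, h2⟩⟩ := huv
      · have hu : (u : ℕ) < n + 1 := by have := v.isLt; omega
        have hi := h ⟨(u : ℕ), hu⟩
        unfold pathE at hi
        rw [if_neg (by
          rw [show ((⟨(u : ℕ), hu⟩ : Fin (n+1)) : ℕ) = (u : ℕ) from rfl]
          exact Nat.not_even_iff_odd.mpr h2)] at hi
        have hcs : (⟨(u : ℕ), hu⟩ : Fin (n+1)).castSucc = u := by
          apply Fin.ext; simp
        have hsc : (⟨(u : ℕ), hu⟩ : Fin (n+1)).succ = v := by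
          apply Fin.ext; simp [h1]
        rwa [hcs, hsc] at hi
      · have hv : (v : ℕ) < n + 1 := by have := u.isLt; omega
        have hi := h ⟨(v : ℕ), hv⟩
        unfold pathE at hi
        rw [if_neg (by
          rw [show ((⟨(v : ℕ), hv⟩ : Fin (n+1)) : ℕ) = (v : ℕ) from rfl]
          exact Nat.not_even_iff_odd.mpr h2)] at hi
        have hcs : (⟨(v : ℕ), hv⟩ : Fin (n+1)).castSucc = v := by
          apply Fin.ext; simp
        have hsc : (⟨(v : ℕ), hv⟩ : Fin (n+1)).succ = u := by
          apply Fin.ext; simp [h1]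
        rw [hcs, hsc] at hi
        exact hi.symm

lemma isHom_iff (n : ℕ) (G : EdgeColouredGraph) (φ : Fin (n+1+1) → G.V) :
    IsHom (altPath (n+1)) G φ ↔ WkP (n+1) (pathE G) φ := by
  constructor
  · intro hh
    apply (isHom_iff' n G φ).mp
    exact ⟨fun u v hadj => hh.1 hadj, fun u v hadj => hh.2 hadj⟩
  · intro hw
    have h2 := (isHom_iff' n G φ).mpr hw
    exact ⟨fun u v hadj => h2.1 u v hadj, fun u v hadj => h2.2 u v hadj⟩

end HomChar
/-- Let `f` be a uniformly random homomorphism from `P_{2k+1}^A` to `G`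
(with `hom(P_{2k+1}^A,G) ≥ 1`), and let `X_i := f(v_i)`. Then
`H(f) = Σ_{i=0}^{2k} H(X_i, X_{i+1}) − Σ_{i=1}^{2k} H(X_i)`. -/
theorem entropy_of_uniform_hom (k : ℕ) (hk : 1 ≤ k) (G : EdgeColouredGraph)
    (hhom : 1 ≤ homCount (altPath (2 * k + 1)) G) :
    entropy (fun φ : {φ : (altPath (2 * k + 1)).V → G.V // IsHom (altPath (2 * k + 1)) G φ} => φ)
      = (∑ i : Fin (2 * k + 1),
          entropy (fun φ : {φ : (altPath (2 * k + 1)).V → G.V //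
              IsHom (altPath (2 * k + 1)) G φ} => (φ.1 i.castSucc, φ.1 i.succ)))
        - ∑ i : Fin (2 * k),
          entropy (fun φ : {φ : (altPath (2 * k + 1)).V → G.V //
              IsHom (altPath (2 * k + 1)) G φ} => φ.1 i.succ.castSucc) := by
  have hPred : IsHom (altPath (2 * k + 1)) G = WkP (2 * k + 1) (pathE G) :=
    funext fun φ => propext (isHom_iff (2 * k) G φ)
  have hc : 1 ≤ Nat.card {x : Fin (2 * k + 1 + 1) → G.V // WkP (2 * k + 1) (pathE G) x} := by
    unfold homCount at hhom
    rw [hPred] at hhom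
    exact hhom
  rw [card_walks (2 * k + 1) (pathE G)] at hc
  have hne : wsum (2 * k + 1) (pathE G) (fun _ => True) ≠ 0 := by omega
  rw [hPred]
  exact AML (2 * k) (pathE G) hne
end

section
/- Let A, B, C be nonempty finite types, let μ be a probability mass function on A × B and let ν be a probability mass function on B × C whose marginal distributions on B coincide. Then there exists a probability mass function π on A × B × C such that, writing π_B for its marginal on B, one has: the marginal of π on A × B equals μ, the marginal of π on B × C equals ν, and for all a ∈ A, b ∈ B, c ∈ C the identity π(a,b,c) · π_B(b) = μ(a,b) · ν(b,c) holds (i.e., under π the first and third coordinates are conditionally independent given the second). -/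
/-!
Glue along the common marginal `m` on `B`: `π(a,b,c) = μ(a,b) ν(b,c) / m(b)`. Summing out `c`
(resp. `a`) produces `∑_c ν(b,c) = m(b)` (resp. `∑_a μ(a,b) = m(b)`), which cancels the
denominator. Where `m(b) = 0` the numerator vanishes as well, and `0 / 0 = 0` in `ℝ≥0∞`.
-/

open scoped ENNReal

namespace PMF

variable {α β γ : Type*}

theorem apply_eq_zero_of_map_apply_eq_zero (p : PMF α) (f : α → β) {a : α}
    (h : p.map f (f a) = 0) : p a = 0 := by
  rw [map_apply, ENNReal.tsum_eq_zero] at h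
  simpa using h a

theorem map_fst_apply (p : PMF (α × β)) (a : α) : p.map Prod.fst a = ∑' b, p (a, b) := by
  simp [map_apply, ENNReal.tsum_prod', ENNReal.tsum_comm (α := α)]

theorem map_snd_apply (p : PMF (α × β)) (b : β) : p.map Prod.snd b = ∑' a, p (a, b) := by
  simp [map_apply, ENNReal.tsum_prod']

theorem map_fst_snd_fst_apply (p : PMF (α × β × γ)) (a : α) (b : β) :
    p.map (fun x => (x.1, x.2.1)) (a, b) = ∑' c, p (a, b, c) := by
  simp only [map_apply, ENNReal.tsum_prod', Prod.mk.injEq]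
  rw [tsum_eq_single a (by simp +contextual [Ne.symm])]
  rw [tsum_eq_single b (by simp +contextual [Ne.symm])]
  simp

theorem map_snd_fst_apply (p : PMF (α × β × γ)) (b : β) :
    p.map (fun x => x.2.1) b = ∑' a, ∑' c, p (a, b, c) := by
  simp only [map_apply, ENNReal.tsum_prod']
  refine tsum_congr fun a => ?_
  rw [ENNReal.tsum_comm]
  simp

noncomputable def glueDensity (μ : PMF (α × β)) (ν : PMF (β × γ)) (x : α × β × γ) :
    ℝ≥0∞ :=
  μ (x.1, x.2.1) * ν x.2 / μ.map Prod.snd x.2.1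

section Glue

variable {μ : PMF (α × β)} {ν : PMF (β × γ)}

theorem tsum_glueDensity_right (hmarg : μ.map Prod.snd = ν.map Prod.fst) (a : α) (b : β) :
    ∑' c, glueDensity μ ν (a, b, c) = μ (a, b) := by
  simp only [glueDensity, div_eq_mul_inv, ENNReal.tsum_mul_right, ENNReal.tsum_mul_left]
  rw [← map_fst_apply, ← hmarg, ← div_eq_mul_inv]
  exact ENNReal.mul_div_cancel_right'
    (μ.apply_eq_zero_of_map_apply_eq_zero Prod.snd (a := (a, b))) (absurd · (apply_ne_top _ _))

theorem tsum_glueDensity_left (hmarg : μ.map Prod.snd = ν.map Prod.fst) (b : β) (c : γ) :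
    ∑' a, glueDensity μ ν (a, b, c) = ν (b, c) := by
  simp only [glueDensity, div_eq_mul_inv, ENNReal.tsum_mul_right]
  rw [← map_snd_apply, ← div_eq_mul_inv, mul_comm (μ.map Prod.snd b), hmarg]
  exact ENNReal.mul_div_cancel_right'
    (ν.apply_eq_zero_of_map_apply_eq_zero Prod.fst (a := (b, c))) (absurd · (apply_ne_top _ _))

theorem tsum_glueDensity (hmarg : μ.map Prod.snd = ν.map Prod.fst) :
    ∑' x, glueDensity μ ν x = 1 := by
  simp_rw [ENNReal.tsum_prod', tsum_glueDensity_right hmarg]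
  rw [← ENNReal.tsum_prod', tsum_coe]

noncomputable def glue (hmarg : μ.map Prod.snd = ν.map Prod.fst) : PMF (α × β × γ) :=
  ⟨glueDensity μ ν, ENNReal.summable.hasSum_iff.2 (tsum_glueDensity hmarg)⟩

theorem glue_apply (hmarg : μ.map Prod.snd = ν.map Prod.fst) (x : α × β × γ) :
    glue hmarg x = glueDensity μ ν x := rfl

theorem map_fst_snd_fst_glue (hmarg : μ.map Prod.snd = ν.map Prod.fst) :
    (glue hmarg).map (fun x => (x.1, x.2.1)) = μ := by
  ext ⟨a, b⟩
  rw [map_fst_snd_fst_apply]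
  exact tsum_glueDensity_right hmarg a b

theorem map_snd_glue (hmarg : μ.map Prod.snd = ν.map Prod.fst) :
    (glue hmarg).map Prod.snd = ν := by
  ext ⟨b, c⟩
  rw [map_snd_apply]
  exact tsum_glueDensity_left hmarg b c

theorem map_snd_fst_glue (hmarg : μ.map Prod.snd = ν.map Prod.fst) :
    (glue hmarg).map (fun x => x.2.1) = μ.map Prod.snd := by
  ext b
  simp only [map_snd_fst_apply, glue_apply, tsum_glueDensity_right hmarg, map_snd_apply]

theorem glue_mul_map_snd_fst_glue (hmarg : μ.map Prod.snd = ν.map Prod.fst)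
    (a : α) (b : β) (c : γ) :
    glue hmarg (a, b, c) * (glue hmarg).map (fun x => x.2.1) b = μ (a, b) * ν (b, c) := by
  rw [map_snd_fst_glue, glue_apply, glueDensity]
  refine ENNReal.div_mul_cancel' (fun h => ?_) (absurd · (apply_ne_top _ _))
  rw [μ.apply_eq_zero_of_map_apply_eq_zero Prod.snd h, zero_mul]

end Glue
end PMF

theorem pmf_gluing_general {A B C : Type}
    (μ : PMF (A × B)) (ν : PMF (B × C))
    (hmarg : μ.map Prod.snd = ν.map Prod.fst) :
    ∃ π : PMF (A × B × C),
      π.map (fun p => (p.1, p.2.1)) = μ ∧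
      π.map (fun p => p.2) = ν ∧
      ∀ a b c, π (a, b, c) * (π.map (fun p => p.2.1)) b = μ (a, b) * ν (b, c) :=
  ⟨PMF.glue hmarg, PMF.map_fst_snd_fst_glue hmarg, PMF.map_snd_glue hmarg,
    PMF.glue_mul_map_snd_fst_glue hmarg⟩

/-- Distribution Gluing Lemma, PMF form. If `μ` is a probability mass
function on `A × B` and `ν` one on `B × C` whose marginals on `B` agree, then there is a
probability mass function `π` on `A × B × C` whose marginal on `A × B` is `μ`, whose
marginal on `B × C` is `ν`, and under which the first and third coordinates are
conditionally independent given the second: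
`π(a,b,c) · π_B(b) = μ(a,b) · ν(b,c)` for all `a, b, c`. -/
theorem pmf_gluing {A B C : Type} [Fintype A] [Fintype B] [Fintype C]
    [Nonempty A] [Nonempty B] [Nonempty C]
    (μ : PMF (A × B)) (ν : PMF (B × C))
    (hmarg : μ.map Prod.snd = ν.map Prod.fst) :
    ∃ π : PMF (A × B × C),
      π.map (fun p => (p.1, p.2.1)) = μ ∧
      π.map (fun p => p.2) = ν ∧
      ∀ a b c, π (a, b, c) * (π.map (fun p => p.2.1)) b = μ (a, b) * ν (b, c) :=
  pmf_gluing_general μ ν hmarg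
end

section
/- Let H be the edge-coloured 4-cycle with vertices u_0, u_1, u_2, u_3 in which the edge u_0u_1 is blue and the three edges u_1u_2, u_2u_3, u_3u_0 are red. Then for every edge-coloured graph G, t(H, G) ≤ (1/4)(3/4)^3. -/
/-- The edge-coloured 4-cycle on vertices `u_0, u_1, u_2, u_3` in which the edge `u_0 u_1`
is blue and the edges `u_1 u_2`, `u_2 u_3`, `u_3 u_0` are red. -/
def blueOneCycleFour : EdgeColouredGraph where
  V := Fin 4
  fintypeV := inferInstance
  red := SimpleGraph.fromRel
    (fun a b => (a = 1 ∧ b = 2) ∨ (a = 2 ∧ b = 3) ∨ (a = 3 ∧ b = 0))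
  blue := SimpleGraph.fromRel (fun a b => a = 0 ∧ b = 1)
  disjoint := by
    intro u v
    rw [SimpleGraph.fromRel_adj, SimpleGraph.fromRel_adj]
    fin_cases u <;> fin_cases v <;> simp

open Finset
set_option maxHeartbeats 1000000

private lemma sum4_reorder {V : Type} [Fintype V] (g : V → V → V → V → ℝ) :
    (∑ y : V, ∑ z : V, ∑ w : V, ∑ x : V, g y z w x)
      = ∑ x : V, ∑ z : V, ∑ y : V, ∑ w : V, g y z w x := by
  calc (∑ y : V, ∑ z : V, ∑ w : V, ∑ x : V, g y z w x)
      = ∑ y : V, ∑ z : V, ∑ x : V, ∑ w : V, g y z w x :=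
        Finset.sum_congr rfl fun y _ => Finset.sum_congr rfl fun z _ => Finset.sum_comm
    _ = ∑ y : V, ∑ x : V, ∑ z : V, ∑ w : V, g y z w x :=
        Finset.sum_congr rfl fun y _ => Finset.sum_comm
    _ = ∑ x : V, ∑ y : V, ∑ z : V, ∑ w : V, g y z w x := Finset.sum_comm
    _ = ∑ x : V, ∑ z : V, ∑ y : V, ∑ w : V, g y z w x :=
        Finset.sum_congr rfl fun x _ => Finset.sum_comm

lemma kernel_bound {V : Type} [Fintype V]
    (A : V → V → ℝ) (hsym : ∀ x y, A x y = A y x)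
    (h0 : ∀ x y, 0 ≤ A x y) :
    ∑ y : V, ∑ z : V, ∑ w : V, ∑ x : V,
      (1 - A x y) * (A y z * (A z w * A w x))
      ≤ 27/256 * (Fintype.card V : ℝ)^4 := by
  classical
  by_cases hne : (Fintype.card V) = 0
  · haveI := Fintype.card_eq_zero_iff.mp hne
    simp [hne]
  set n : ℝ := (Fintype.card V : ℝ) with hn
  have hn0 : 0 ≤ n := by positivity
  have hnpos : 0 < n := by
    rw [hn]; exact_mod_cast Nat.pos_of_ne_zero hne
  set v1 : V → ℝ := fun x => ∑ y : V, A x y with hv1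
  set v2 : V → ℝ := fun x => ∑ y : V, A x y * v1 y with hv2
  set v3 : V → ℝ := fun x => ∑ y : V, A x y * v2 y with hv3
  set Bm : V → V → ℝ := fun x z => ∑ y : V, A x y * A y z with hBm
  have hcol : ∀ y : V, (∑ x : V, A x y) = v1 y := by
    intro y
    simp only [hv1]
    exact Finset.sum_congr rfl fun x _ => hsym x y
  have hBsym : ∀ x z, Bm x z = Bm z x := by
    intro x z
    simp only [hBm]
    refine Finset.sum_congr rfl fun y _ => ?_
    rw [hsym x y, hsym y z]; ring
  have hv2B : ∀ x, v2 x = ∑ z : V, Bm x z := by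
    intro x
    simp only [hv2, hv1, hBm, Finset.mul_sum]
    exact Finset.sum_comm
  set m1 : ℝ := ∑ x : V, v1 x with hm1
  set m2 : ℝ := ∑ x : V, v2 x with hm2
  set m3 : ℝ := ∑ x : V, v3 x with hm3
  set m4 : ℝ := ∑ x : V, (v2 x)^2 with hm4
  set trA4 : ℝ := ∑ x : V, ∑ z : V, (Bm x z)^2 with htr
  have hip2 : ∑ x : V, v1 x * v1 x = m2 := by
    rw [hm2]
    have h : ∑ x : V, v2 x = ∑ y : V, (∑ x : V, A x y) * v1 y := by
      simp only [hv2]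
      rw [Finset.sum_comm]
      simp [Finset.sum_mul]
    rw [h]
    exact (Finset.sum_congr rfl fun y _ => by rw [hcol y]).symm
  have hip3 : ∑ x : V, v1 x * v2 x = m3 := by
    rw [hm3]
    have h : ∑ x : V, v3 x = ∑ y : V, (∑ x : V, A x y) * v2 y := by
      simp only [hv3]
      rw [Finset.sum_comm]
      simp [Finset.sum_mul]
    rw [h]
    exact (Finset.sum_congr rfl fun y _ => by rw [hcol y]).symm
  -- the quadruple sum equals m3 - trA4
  have t1 : ∑ y : V, ∑ z : V, ∑ w : V, ∑ x : V, A y z * (A z w * A w x) = m3 := by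
    rw [hm3]
    refine Finset.sum_congr rfl fun y _ => ?_
    simp only [hv3, hv2, hv1, Finset.mul_sum]
  have t2 : ∑ y : V, ∑ z : V, ∑ w : V, ∑ x : V,
      A x y * (A y z * (A z w * A w x)) = trA4 := by
    rw [sum4_reorder, htr]
    refine Finset.sum_congr rfl fun x _ => Finset.sum_congr rfl fun z _ => ?_
    have hsq : (Bm x z)^2 = Bm x z * Bm z x := by rw [← hBsym x z]; ring
    rw [hsq]
    simp only [hBm, Finset.sum_mul, Finset.mul_sum]
    refine Finset.sum_congr rfl fun y _ => Finset.sum_congr rfl fun w _ => by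
      rw [hsym x w, hsym w z, hsym z y, hsym y x]; ring
  have hsum_eq : ∑ y : V, ∑ z : V, ∑ w : V, ∑ x : V,
      (1 - A x y) * (A y z * (A z w * A w x)) = m3 - trA4 := by
    have expand : ∀ y z w x : V, (1 - A x y) * (A y z * (A z w * A w x))
        = A y z * (A z w * A w x) - A x y * (A y z * (A z w * A w x)) :=
      fun y z w x => by ring
    simp only [expand, Finset.sum_sub_distrib]
    rw [t1, t2]
  -- Cauchy-Schwarz: m4 ≤ n * trA4
  have hm4_le : m4 ≤ n * trA4 := by
    rw [hm4, htr, Finset.mul_sum]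
    refine Finset.sum_le_sum fun x _ => ?_
    rw [hv2B x]
    have := sq_sum_le_card_mul_sum_sq (s := (univ : Finset V)) (f := fun z => Bm x z)
    simpa [hn] using this
  -- SOS expansions
  have hS1 : ∑ x : V, (v2 x - (n/2) * v1 x - 3*n^2/16)^2
      = m4 - n*m3 - (3*n^2/8)*m2 + (n^2/4)*m2 + (3*n^3/16)*m1 + (9/256)*n^4*n := by
    have expand : ∀ x : V, (v2 x - (n/2) * v1 x - 3*n^2/16)^2
        = (v2 x)^2 - n*(v1 x * v2 x) - (3*n^2/8)*(v2 x)
          + (n^2/4)*(v1 x * v1 x) + (3*n^3/16)*(v1 x) + (9/256)*n^4 :=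
      fun x => by ring
    simp only [expand, Finset.sum_add_distrib, Finset.sum_sub_distrib,
      ← Finset.mul_sum, Finset.sum_const, card_univ, nsmul_eq_mul]
    rw [hip2, hip3, ← hm1, ← hm2, ← hm4]
    ring
  have hS2 : ∑ x : V, (v1 x - 3*n/4)^2 = m2 - (3*n/2)*m1 + (9/16)*n^2*n := by
    have expand : ∀ x : V, (v1 x - 3*n/4)^2
        = (v1 x * v1 x) - (3*n/2)*(v1 x) + (9/16)*n^2 := fun x => by ring
    simp only [expand, Finset.sum_add_distrib, Finset.sum_sub_distrib,
      ← Finset.mul_sum, Finset.sum_const, card_univ, nsmul_eq_mul]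
    rw [hip2, ← hm1]
    ring
  have sos1 : (0:ℝ) ≤ ∑ x : V, (v2 x - (n/2) * v1 x - 3*n^2/16)^2 := by positivity
  have sos2 : (0:ℝ) ≤ ∑ x : V, (v1 x - 3*n/4)^2 := by positivity
  rw [hS1] at sos1
  rw [hS2] at sos2
  have sos2' : (0:ℝ) ≤ (n^2/8) * (m2 - (3*n/2)*m1 + (9/16)*n^2*n) :=
    mul_nonneg (by positivity) sos2
  have key : n * m3 ≤ m4 + 27/256 * n^4 * n := by nlinarith [sos1, sos2']
  rw [hsum_eq]
  have h1 : n * m3 ≤ n * (trA4 + 27/256*n^4) := by nlinarith [key, hm4_le]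
  have h2 : m3 ≤ trA4 + 27/256*n^4 := le_of_mul_le_mul_left h1 hnpos
  linarith

/-- For every edge-coloured graph `G`, the density of the 4-cycle with
exactly one blue edge satisfies `t(H, G) ≤ (1/4)(3/4)^3`. -/
theorem blueOneCycleFour_density_le (G : EdgeColouredGraph) :
    homDensity blueOneCycleFour G ≤ (1 / 4 : ℝ) * (3 / 4) ^ 3 := by
  classical
  have hcard4 : Nat.card (blueOneCycleFour.V) = 4 := by
    simp [blueOneCycleFour, Nat.card_eq_fintype_card]
  have hiff : ∀ φ : Fin 4 → G.V, IsHom blueOneCycleFour G φ ↔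
      (G.blue.Adj (φ 0) (φ 1) ∧ G.red.Adj (φ 1) (φ 2) ∧
        G.red.Adj (φ 2) (φ 3) ∧ G.red.Adj (φ 3) (φ 0)) := by
    intro φ
    constructor
    · rintro ⟨hr, hb⟩
      exact ⟨hb (by simp [blueOneCycleFour, SimpleGraph.fromRel_adj]),
        hr (by simp [blueOneCycleFour, SimpleGraph.fromRel_adj]),
        hr (by simp [blueOneCycleFour, SimpleGraph.fromRel_adj]),
        hr (by simp [blueOneCycleFour, SimpleGraph.fromRel_adj])⟩
    · rintro ⟨h1, h2, h3, h4⟩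
      constructor
      · intro u v huv
        fin_cases u <;> fin_cases v <;>
          first
            | exact h2 | exact h2.symm | exact h3 | exact h3.symm
            | exact h4 | exact h4.symm
            | exact absurd huv (by simp [blueOneCycleFour, SimpleGraph.fromRel_adj])
      · intro u v huv
        fin_cases u <;> fin_cases v <;>
          first
            | exact h1 | exact h1.symm
            | exact absurd huv (by simp [blueOneCycleFour, SimpleGraph.fromRel_adj])
  set Vt := G.V
  set Am : G.V → G.V → ℝ := fun x y => if G.red.Adj x y then 1 else 0 with hAm
  set Bl : G.V → G.V → ℝ := fun x y => if G.blue.Adj x y then 1 else 0 with hBl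
  set P : G.V × G.V × G.V × G.V → Prop := fun p =>
    G.blue.Adj p.2.2.2 p.1 ∧ G.red.Adj p.1 p.2.1 ∧ G.red.Adj p.2.1 p.2.2.1 ∧
      G.red.Adj p.2.2.1 p.2.2.2 with hP
  have e : {φ : Fin 4 → G.V // IsHom blueOneCycleFour G φ} ≃ {p // P p} :=
    { toFun := fun φ => ⟨(φ.1 1, φ.1 2, φ.1 3, φ.1 0), by
        obtain ⟨a1, a2, a3, a4⟩ := (hiff φ.1).mp φ.2
        exact ⟨a1, a2, a3, a4⟩⟩
      invFun := fun p => ⟨![p.1.2.2.2, p.1.1, p.1.2.1, p.1.2.2.1], by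
        rw [hiff]
        obtain ⟨a1, a2, a3, a4⟩ := p.2
        exact ⟨a1, a2, a3, a4⟩⟩
      left_inv := fun φ => by
        ext i
        fin_cases i <;> rfl
      right_inv := fun p => by
        ext <;> rfl }
  have hcount : (homCount blueOneCycleFour G : ℝ)
      = ∑ b : G.V, ∑ c : G.V, ∑ d : G.V, ∑ a : G.V,
          Bl a b * (Am b c * (Am c d * Am d a)) := by
    have h0 : homCount blueOneCycleFour G
        = Nat.card {φ : Fin 4 → G.V // IsHom blueOneCycleFour G φ} := rfl
    have h1 : homCount blueOneCycleFour G = Fintype.card {p // P p} := by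
      rw [h0, Nat.card_congr e, Nat.card_eq_fintype_card]
    rw [h1, Fintype.card_subtype, Finset.card_filter, Nat.cast_sum]
    simp only [Nat.cast_ite, Nat.cast_one, Nat.cast_zero, Fintype.sum_prod_type]
    refine Finset.sum_congr rfl fun b _ => Finset.sum_congr rfl fun c _ =>
      Finset.sum_congr rfl fun d _ => Finset.sum_congr rfl fun a _ => ?_
    by_cases g1 : G.blue.Adj a b <;> by_cases g2 : G.red.Adj b c <;>
      by_cases g3 : G.red.Adj c d <;> by_cases g4 : G.red.Adj d a <;>
      simp [hP, hAm, hBl, g1, g2, g3, g4]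
  have hAsym : ∀ x y : G.V, Am x y = Am y x := by
    intro x y
    simp only [hAm]
    by_cases h : G.red.Adj x y
    · rw [if_pos h, if_pos h.symm]
    · rw [if_neg h, if_neg fun h' => h h'.symm]
  have hA0 : ∀ x y : G.V, 0 ≤ Am x y := by
    intro x y; simp only [hAm]; split_ifs <;> norm_num
  have hble : ∀ a b : G.V, Bl a b ≤ 1 - Am a b := by
    intro a b
    simp only [hAm, hBl]
    by_cases h : G.red.Adj a b
    · rw [if_pos h, if_neg (fun h' => G.disjoint a b ⟨h, h'⟩)]; norm_num
    · rw [if_neg h]; split_ifs <;> norm_num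
  have hmono : (homCount blueOneCycleFour G : ℝ)
      ≤ ∑ b : G.V, ∑ c : G.V, ∑ d : G.V, ∑ a : G.V,
          (1 - Am a b) * (Am b c * (Am c d * Am d a)) := by
    rw [hcount]
    refine Finset.sum_le_sum fun b _ => Finset.sum_le_sum fun c _ =>
      Finset.sum_le_sum fun d _ => Finset.sum_le_sum fun a _ => ?_
    exact mul_le_mul_of_nonneg_right (hble a b)
      (mul_nonneg (hA0 b c) (mul_nonneg (hA0 c d) (hA0 d a)))
  have hker := kernel_bound Am hAsym hA0
  have hfinal : (homCount blueOneCycleFour G : ℝ)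
      ≤ 27/256 * (Fintype.card G.V : ℝ)^4 := hmono.trans hker
  rw [homDensity, hcard4, Nat.card_eq_fintype_card]
  by_cases h0 : Fintype.card G.V = 0
  · rw [h0]
    norm_num
  · have hcpos : (0:ℝ) < (Fintype.card G.V : ℝ) := by
      exact_mod_cast Nat.pos_of_ne_zero h0
    rw [div_le_iff₀ (by positivity)]
    rw [show (1/4:ℝ)*(3/4)^3 = 27/256 by norm_num]
    exact hfinal
end

section
/- Let n ≥ 1 and consider a colouring of the edges of the complete graph K_n with colours red and blue; let G denote the resulting edge-coloured graph and let R denote the simple graph formed by the red edges. Then hom(P_3^A, G) + hom(P_3, R) ≤ hom(K_2, R)^2, where hom(P_3^A, G) is the number of edge-coloured homomorphisms from the alternating path P_3^A to G, hom(P_3, R) is the number of graph homomorphisms from the path with 3 edges to R (equivalently, the number of walks of length 3 in R), and hom(K_2, R) = 2·e_R is twice the number of red edges. -/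
namespace SimpleGraph

variable {V : Type*} {R : SimpleGraph V} {a b : V}

def Adj.topFinTwoHom (h : R.Adj a b) : (⊤ : SimpleGraph (Fin 2)) →g R where
  toFun := ![a, b]
  map_rel' {i j} hij := by
    fin_cases i <;> fin_cases j <;> simp_all [h.symm]

def outerEdges (f : Fin 4 → V) (h01 : R.Adj (f 0) (f 1)) (h32 : R.Adj (f 3) (f 2)) :
    ((⊤ : SimpleGraph (Fin 2)) →g R) × ((⊤ : SimpleGraph (Fin 2)) →g R) :=
  (h01.topFinTwoHom, h32.topFinTwoHom)

lemma eq_of_outerEdges_eq {f g : Fin 4 → V} {hf01 : R.Adj (f 0) (f 1)}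
    {hf32 : R.Adj (f 3) (f 2)} {hg01 : R.Adj (g 0) (g 1)} {hg32 : R.Adj (g 3) (g 2)}
    (h : outerEdges f hf01 hf32 = outerEdges g hg01 hg32) : f = g := by
  obtain ⟨h01, h32⟩ := Prod.ext_iff.mp h
  funext i
  fin_cases i
  exacts [DFunLike.congr_fun h01 0, DFunLike.congr_fun h01 1, DFunLike.congr_fun h32 1,
    DFunLike.congr_fun h32 0]

lemma pathGraph_adj_castSucc_succ {n : ℕ} (i : Fin n) :
    (pathGraph (n + 1)).Adj i.castSucc i.succ := by
  simp [pathGraph_adj]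

end SimpleGraph

open SimpleGraph

lemma altPath_red_adj_castSucc_succ {k : ℕ} (i : Fin k) (hi : Even (i : ℕ)) :
    (altPath k).red.Adj i.castSucc i.succ := by
  simp [altPath, hi, Fin.castSucc_lt_succ.ne]

lemma altPath_blue_adj_castSucc_succ {k : ℕ} (i : Fin k) (hi : Odd (i : ℕ)) :
    (altPath k).blue.Adj i.castSucc i.succ := by
  simp [altPath, hi, Fin.castSucc_lt_succ.ne]

theorem altPathThree_plus_pathThree_le_general (G : EdgeColouredGraph) :
    homCount (altPath 3) G + Nat.card (SimpleGraph.pathGraph 4 →g G.red)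
      ≤ Nat.card ((⊤ : SimpleGraph (Fin 2)) →g G.red) ^ 2 := by
  have red01 := altPath_red_adj_castSucc_succ (0 : Fin 3) (by decide)
  have red32 := (altPath_red_adj_castSucc_succ (2 : Fin 3) (by decide)).symm
  have blue12 := altPath_blue_adj_castSucc_succ (1 : Fin 3) (by decide)
  let altEdges (φ : {φ : (altPath 3).V → G.V // IsHom (altPath 3) G φ}) :=
    outerEdges φ.1 (φ.2.1 red01) (φ.2.1 red32)
  let pathEdges (ψ : pathGraph 4 →g G.red) :=
    outerEdges ψ (ψ.map_rel (pathGraph_adj_castSucc_succ 0))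
      (ψ.map_rel (pathGraph_adj_castSucc_succ 2).symm)
  have hinj : Function.Injective (Sum.elim altEdges pathEdges) := by
    refine Function.Injective.sumElim (fun φ φ' h ↦ Subtype.ext (eq_of_outerEdges_eq h))
      (fun ψ ψ' h ↦ DFunLike.coe_injective (eq_of_outerEdges_eq h)) fun φ ψ h ↦ ?_
    have hφψ := eq_of_outerEdges_eq h
    refine G.disjoint _ _ ⟨?_, φ.2.2 blue12⟩
    rw [hφψ]
    exact ψ.map_rel (pathGraph_adj_castSucc_succ 1)
  calc homCount (altPath 3) G + Nat.card (pathGraph 4 →g G.red)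
      = Nat.card ({φ // IsHom (altPath 3) G φ} ⊕ (pathGraph 4 →g G.red)) := Nat.card_sum.symm
    _ ≤ Nat.card (((⊤ : SimpleGraph (Fin 2)) →g G.red) × ((⊤ : SimpleGraph (Fin 2)) →g G.red)) :=
      Nat.card_le_card_of_injective _ hinj
    _ = Nat.card ((⊤ : SimpleGraph (Fin 2)) →g G.red) ^ 2 := by rw [Nat.card_prod, sq]

/-- For a red/blue colouring of the edges of the complete graph `K_n`
(`n ≥ 1`), with `G` the resulting edge-coloured graph and `R` the graph of red edges,
`hom(P_3^A, G) + hom(P_3, R) ≤ hom(K_2, R)^2`. -/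
theorem altPathThree_plus_pathThree_le (n : ℕ) (hn : 1 ≤ n) (G : EdgeColouredGraph)
    (hcard : Nat.card G.V = n)
    (hcomplete : G.red ⊔ G.blue = ⊤) :
    homCount (altPath 3) G + Nat.card (SimpleGraph.pathGraph 4 →g G.red)
      ≤ Nat.card ((⊤ : SimpleGraph (Fin 2)) →g G.red) ^ 2 :=
  altPathThree_plus_pathThree_le_general G
end
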